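/- arXiv:math/9402210 — 9 statements merged into one kernel-verified Lean document; each statement's English description precedes it below -/
import Mathlib

section
/- If f is Bochner integrable from a probability space (Ω, F, μ) into a Banach space E, then for each ε > 0 and each measurable set B with μ(B) > 0, there exists a measurable subset A ⊆ B with μ(A) > 0 such that every measurable subset A₀ of A satisfies Bocce-osc f|_{A₀} < ε. -/
open MeasureTheory Filter Topology

/-- The average value of `f` over `A`. -/
noncomputable def avg {Ω E : Type*} [MeasurableSpace Ω] [NormedAddCommGroup E]
    [NormedSpace ℝ E] (μ : Measure Ω) (f : Ω → E) (A : Set Ω) : E :=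
  (μ A).toReal⁻¹ • ∫ ω in A, f ω ∂μ

/-- The Bocce oscillation of `f` over `A`. -/
noncomputable def bocce {Ω E : Type*} [MeasurableSpace Ω] [NormedAddCommGroup E]
    [NormedSpace ℝ E] (μ : Measure Ω) (f : Ω → E) (A : Set Ω) : ℝ :=
  (∫ ω in A, ‖f ω - avg μ f A‖ ∂μ) / (μ A).toReal

/-!
A strongly measurable version `g` of `f` has separable range, so countably many balls of radius
`ε / 3` cover it and one of them pulls back under `g` to a subset of `B` of positive measure. On
every subset `A₀` of that set `f` stays a.e. within `ε / 3` of the centre `x`; hence so does its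
average, and the mean distance of `f` from its average is at most `2ε / 3`.
-/

theorem MeasureTheory.StronglyMeasurable.exists_measure_inter_preimage_ball_pos
    {α β : Type*} {m : MeasurableSpace α} [PseudoMetricSpace β] {g : α → β}
    (hg : StronglyMeasurable g) {μ : Measure α} {s : Set α} (hs : μ s ≠ 0) {δ : ℝ}
    (hδ : 0 < δ) : ∃ x, 0 < μ (s ∩ g ⁻¹' Metric.ball x δ) := by
  obtain ⟨t, ht, hrange⟩ := hg.isSeparable_range
  by_contra! h
  have hcover : s ⊆ ⋃ x ∈ t, s ∩ g ⁻¹' Metric.ball x δ := by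
    intro ω hω
    obtain ⟨x, hxt, hx⟩ := Metric.mem_closure_iff.1 (hrange ⟨ω, rfl⟩) δ hδ
    exact Set.mem_biUnion hxt ⟨hω, Metric.mem_ball.2 hx⟩
  exact hs <| measure_mono_null hcover <|
    (measure_biUnion_null_iff ht).2 fun x _ ↦ nonpos_iff_eq_zero.1 (h x)

section Bocce

variable {Ω E : Type*} [MeasurableSpace Ω] [NormedAddCommGroup E] [NormedSpace ℝ E]
  [CompleteSpace E] {μ : Measure Ω} {f : Ω → E} {A : Set Ω}

theorem measureReal_mul_norm_avg_sub_le (hA : μ A ≠ ⊤) (hf : IntegrableOn f A μ) (x : E) :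
    μ.real A * ‖avg μ f A - x‖ ≤ ∫ ω in A, ‖f ω - x‖ ∂μ := by
  rcases eq_or_ne (μ.real A) 0 with hA0 | hA0
  · rw [hA0, zero_mul]
    exact integral_nonneg fun _ ↦ norm_nonneg _
  have hsmul : μ.real A • (avg μ f A - x) = ∫ ω in A, (f ω - x) ∂μ := by
    have : IsFiniteMeasure (μ.restrict A) := isFiniteMeasure_restrict.2 hA
    rw [integral_sub hf (integrable_const x), setIntegral_const, smul_sub, avg,
      ← measureReal_def, smul_inv_smul₀ hA0]
  calc μ.real A * ‖avg μ f A - x‖ = ‖∫ ω in A, (f ω - x) ∂μ‖ := by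
        rw [← hsmul, norm_smul, Real.norm_of_nonneg measureReal_nonneg]
    _ ≤ ∫ ω in A, ‖f ω - x‖ ∂μ := norm_integral_le_integral_norm _

theorem setIntegral_norm_sub_avg_le (hA : μ A ≠ ⊤) (hf : IntegrableOn f A μ) (x : E) :
    ∫ ω in A, ‖f ω - avg μ f A‖ ∂μ ≤ 2 * ∫ ω in A, ‖f ω - x‖ ∂μ := by
  have : IsFiniteMeasure (μ.restrict A) := isFiniteMeasure_restrict.2 hA
  have hfx : IntegrableOn (fun ω ↦ ‖f ω - x‖) A μ := (hf.sub (integrable_const x)).norm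
  calc ∫ ω in A, ‖f ω - avg μ f A‖ ∂μ ≤ ∫ ω in A, (‖f ω - x‖ + ‖avg μ f A - x‖) ∂μ := by
        refine integral_mono ((hf.sub (integrable_const _)).norm) (hfx.add (integrable_const _))
          fun ω ↦ ?_
        simpa only [norm_sub_rev x] using norm_sub_le_norm_sub_add_norm_sub (f ω) x (avg μ f A)
    _ = ∫ ω in A, ‖f ω - x‖ ∂μ + μ.real A * ‖avg μ f A - x‖ := by
        rw [integral_add hfx (integrable_const _), setIntegral_const, smul_eq_mul]
    _ ≤ 2 * ∫ ω in A, ‖f ω - x‖ ∂μ := by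
        linarith [measureReal_mul_norm_avg_sub_le hA hf x]

theorem bocce_le_two_mul_of_ae_norm_sub_le (hA : μ A ≠ ⊤) (hf : IntegrableOn f A μ) {x : E}
    {δ : ℝ} (hδ : 0 ≤ δ) (hfx : ∀ᵐ ω ∂μ.restrict A, ‖f ω - x‖ ≤ δ) :
    bocce μ f A ≤ 2 * δ := by
  rcases eq_or_ne (μ.real A) 0 with hA0 | hA0
  · rw [bocce, ← measureReal_def, hA0, div_zero]
    positivity
  have : IsFiniteMeasure (μ.restrict A) := isFiniteMeasure_restrict.2 hA
  have hbound : ∫ ω in A, ‖f ω - x‖ ∂μ ≤ μ.real A * δ := by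
    calc ∫ ω in A, ‖f ω - x‖ ∂μ ≤ ∫ _ in A, δ ∂μ :=
          integral_mono_ae (hf.sub (integrable_const x)).norm (integrable_const δ) hfx
      _ = μ.real A * δ := by rw [setIntegral_const, smul_eq_mul]
  rw [bocce, ← measureReal_def, div_le_iff₀ (measureReal_nonneg.lt_of_ne' hA0)]
  linarith [setIntegral_norm_sub_avg_le hA hf x]

end Bocce

theorem exists_small_bocce_subset {Ω E : Type*} [MeasurableSpace Ω] [NormedAddCommGroup E]
    [NormedSpace ℝ E] [CompleteSpace E] (μ : Measure Ω) [IsProbabilityMeasure μ]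
    (f : Ω → E) (hf : Integrable f μ)
    (ε : ℝ) (hε : 0 < ε) (B : Set Ω) (hB : MeasurableSet B) (hB0 : 0 < μ B) :
    ∃ A ⊆ B, MeasurableSet A ∧ 0 < μ A ∧
      ∀ A₀ ⊆ A, MeasurableSet A₀ → bocce μ f A₀ < ε := by
  set g := hf.aestronglyMeasurable.mk f
  have hg : StronglyMeasurable g := hf.aestronglyMeasurable.stronglyMeasurable_mk
  have hδ : 0 < ε / 3 := by positivity
  obtain ⟨x, hx⟩ := hg.exists_measure_inter_preimage_ball_pos hB0.ne' hδ
  have hball : MeasurableSet (g ⁻¹' Metric.ball x (ε / 3)) :=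
    (hg.dist stronglyMeasurable_const).measurable measurableSet_Iio
  refine ⟨_, Set.inter_subset_left, hB.inter hball, hx, fun A₀ hA₀ hA₀m ↦ ?_⟩
  have hclose : ∀ᵐ ω ∂μ.restrict A₀, ‖f ω - x‖ ≤ ε / 3 := by
    filter_upwards [ae_restrict_of_ae hf.aestronglyMeasurable.ae_eq_mk,
      ae_restrict_mem hA₀m] with ω hfg hω
    rw [hfg, ← dist_eq_norm]
    exact (hA₀ hω).2.le
  calc bocce μ f A₀ ≤ 2 * (ε / 3) :=
        bocce_le_two_mul_of_ae_norm_sub_le (measure_ne_top μ A₀) hf.integrableOn hδ.le hclose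
    _ < ε := by linarith
end

section
/- If a sequence (f_k) in L¹(μ, E) converges in L¹-norm to f₀, then (f_k) satisfies the sequential Bocce criterion. -/
open MeasureTheory Filter Topology

/-- The sequential Bocce criterion. -/
def SeqBocceCriterion {Ω E : Type*} [MeasurableSpace Ω] [NormedAddCommGroup E]
    [NormedSpace ℝ E] (μ : Measure Ω) (f : ℕ → Ω → E) : Prop :=
  ∀ k : ℕ → ℕ, StrictMono k → ∀ ε : ℝ, 0 < ε → ∀ B : Set Ω, MeasurableSet B → 0 < μ B →
    ∃ A ⊆ B, MeasurableSet A ∧ 0 < μ A ∧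
      Filter.liminf (fun j => bocce μ (f (k j)) A) Filter.atTop < ε


/-!
For every constant `c`, `bocce μ h A ≤ 2 * (∫ ω in A, ‖h ω - c‖ ∂μ) / μ(A)`: replacing the mean
by `c` costs at most `‖avg μ h A - c‖ ≤ (∫ ω in A, ‖h ω - c‖ ∂μ) / μ(A)`. An integrable `f₀` is
essentially separably valued, so every `B` of positive measure contains some `A` of positive
measure on which `f₀` stays within `ε / 4` of a constant. On that `A`,
`bocce μ (f k) A ≤ 2 * ‖f k - f₀‖₁ / μ(A) + ε / 2`, and the right side tends to `ε / 2`.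
-/

section Oscillation

variable {Ω : Type*} [MeasurableSpace Ω] {μ : Measure Ω}

lemma exists_measure_inter_preimage_closedBall_ne_zero {X : Type*} [PseudoMetricSpace X]
    {g : Ω → X} (hg : TopologicalSpace.IsSeparable (Set.range g)) {s : Set Ω} (hs : μ s ≠ 0)
    {δ : ℝ} (hδ : 0 < δ) : ∃ c, μ (s ∩ g ⁻¹' Metric.closedBall c δ) ≠ 0 := by
  obtain ⟨t, ht, hrange⟩ := hg
  by_contra! hnull
  have hcover : s ⊆ ⋃ c ∈ t, s ∩ g ⁻¹' Metric.closedBall c δ := by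
    intro ω hω
    obtain ⟨c, hc, hdist⟩ := Metric.mem_closure_iff.1 (hrange (Set.mem_range_self ω)) δ hδ
    exact Set.mem_biUnion hc ⟨hω, Metric.mem_closedBall.2 hdist.le⟩
  exact hs (measure_mono_null hcover ((measure_biUnion_null_iff ht).2 fun c _ => hnull c))

lemma exists_subset_ae_norm_sub_le {E : Type*} [SeminormedAddCommGroup E] {g : Ω → E}
    (hg : AEStronglyMeasurable g μ) {B : Set Ω} (hB : MeasurableSet B) (hB₀ : μ B ≠ 0) {δ : ℝ}
    (hδ : 0 < δ) :
    ∃ A ⊆ B, MeasurableSet A ∧ 0 < μ A ∧ ∃ c : E, ∀ᵐ ω ∂μ.restrict A, ‖g ω - c‖ ≤ δ := by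
  obtain ⟨c, hc⟩ := exists_measure_inter_preimage_closedBall_ne_zero
    hg.stronglyMeasurable_mk.isSeparable_range hB₀ hδ
  have hA : MeasurableSet (B ∩ hg.mk g ⁻¹' Metric.closedBall c δ) :=
    hB.inter ((hg.stronglyMeasurable_mk.dist stronglyMeasurable_const).measurable measurableSet_Iic)
  refine ⟨_, Set.inter_subset_left, hA, pos_iff_ne_zero.2 hc, c, ?_⟩
  filter_upwards [ae_restrict_of_ae hg.ae_eq_mk, ae_restrict_mem hA] with ω hω hωA
  rw [hω, ← dist_eq_norm_sub]
  exact hωA.2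

variable {E : Type*} [NormedAddCommGroup E] [NormedSpace ℝ E]

lemma bocce_nonneg (h : Ω → E) (A : Set Ω) : 0 ≤ bocce μ h A :=
  div_nonneg (integral_nonneg fun _ => norm_nonneg _) ENNReal.toReal_nonneg

variable [CompleteSpace E]

lemma norm_avg_sub_le {h : Ω → E} {A : Set Ω} (hh : IntegrableOn h A μ) (hA₀ : μ A ≠ 0)
    (hA : μ A ≠ ⊤) (c : E) :
    ‖avg μ h A - c‖ ≤ (∫ ω in A, ‖h ω - c‖ ∂μ) / (μ A).toReal := by
  have ha : (μ A).toReal ≠ 0 := ENNReal.toReal_ne_zero.2 ⟨hA₀, hA⟩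
  have hsub : avg μ h A - c = (μ A).toReal⁻¹ • ∫ ω in A, (h ω - c) ∂μ := by
    rw [integral_sub hh (integrableOn_const hA), setIntegral_const, measureReal_def, smul_sub,
      smul_smul, inv_mul_cancel₀ ha, one_smul, avg]
  rw [hsub, norm_smul, Real.norm_eq_abs, abs_inv, ENNReal.abs_toReal, inv_mul_eq_div]
  gcongr
  exact norm_integral_le_integral_norm _

lemma bocce_le_two_mul_setIntegral_norm_sub {h : Ω → E} {A : Set Ω} (hh : IntegrableOn h A μ)
    (hA₀ : μ A ≠ 0) (hA : μ A ≠ ⊤) (c : E) :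
    bocce μ h A ≤ 2 * (∫ ω in A, ‖h ω - c‖ ∂μ) / (μ A).toReal := by
  have ha : 0 < (μ A).toReal := ENNReal.toReal_pos hA₀ hA
  have havg := (le_div_iff₀ ha).1 (norm_avg_sub_le hh hA₀ hA c)
  have hhc : IntegrableOn (fun ω => ‖h ω - c‖) A μ := (hh.sub (integrableOn_const hA)).norm
  have hint : ∫ ω in A, ‖h ω - avg μ h A‖ ∂μ ≤ 2 * ∫ ω in A, ‖h ω - c‖ ∂μ :=
    calc ∫ ω in A, ‖h ω - avg μ h A‖ ∂μ
        ≤ ∫ ω in A, (‖h ω - c‖ + ‖avg μ h A - c‖) ∂μ := by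
          refine integral_mono (hh.sub (integrableOn_const hA)).norm
            (hhc.add (integrableOn_const hA)) fun ω => ?_
          rw [norm_sub_rev (avg μ h A)]
          exact norm_sub_le_norm_sub_add_norm_sub _ _ _
      _ = (∫ ω in A, ‖h ω - c‖ ∂μ) + (μ A).toReal * ‖avg μ h A - c‖ := by
          rw [integral_add hhc (integrableOn_const hA),
            setIntegral_const, smul_eq_mul, measureReal_def]
      _ ≤ 2 * ∫ ω in A, ‖h ω - c‖ ∂μ := by linarith
  exact div_le_div_of_nonneg_right hint ha.le

lemma bocce_le_of_ae_norm_sub_le [IsFiniteMeasure μ] {h h₀ : Ω → E} (hh : Integrable h μ)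
    (hh₀ : Integrable h₀ μ) {A : Set Ω} (hA₀ : μ A ≠ 0) {c : E} {δ : ℝ}
    (hc : ∀ᵐ ω ∂μ.restrict A, ‖h₀ ω - c‖ ≤ δ) :
    bocce μ h A ≤ 2 * (∫ ω, ‖h ω - h₀ ω‖ ∂μ) / (μ A).toReal + 2 * δ := by
  have hA : μ A ≠ ⊤ := measure_ne_top μ A
  have ha : 0 < (μ A).toReal := ENNReal.toReal_pos hA₀ hA
  have hclose : ∫ ω in A, ‖h₀ ω - c‖ ∂μ ≤ (μ A).toReal * δ := by
    calc ∫ ω in A, ‖h₀ ω - c‖ ∂μ ≤ ∫ _ in A, δ ∂μ :=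
          integral_mono_ae (hh₀.sub (integrable_const c)).norm.integrableOn
            (integrableOn_const hA) hc
      _ = (μ A).toReal * δ := by rw [setIntegral_const, smul_eq_mul, measureReal_def]
  have htriangle : ∫ ω in A, ‖h ω - c‖ ∂μ ≤
      (∫ ω, ‖h ω - h₀ ω‖ ∂μ) + ∫ ω in A, ‖h₀ ω - c‖ ∂μ :=
    calc ∫ ω in A, ‖h ω - c‖ ∂μ ≤ ∫ ω in A, (‖h ω - h₀ ω‖ + ‖h₀ ω - c‖) ∂μ :=
          integral_mono (hh.sub (integrable_const c)).norm.integrableOn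
            ((hh.sub hh₀).norm.integrableOn.add (hh₀.sub (integrable_const c)).norm.integrableOn)
            fun ω => norm_sub_le_norm_sub_add_norm_sub _ _ _
      _ = (∫ ω in A, ‖h ω - h₀ ω‖ ∂μ) + ∫ ω in A, ‖h₀ ω - c‖ ∂μ :=
          integral_add (hh.sub hh₀).norm.integrableOn
            (hh₀.sub (integrable_const c)).norm.integrableOn
      _ ≤ (∫ ω, ‖h ω - h₀ ω‖ ∂μ) + ∫ ω in A, ‖h₀ ω - c‖ ∂μ :=
          add_le_add_left (setIntegral_le_integral (hh.sub hh₀).norm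
            (.of_forall fun _ => norm_nonneg _)) _
  calc bocce μ h A ≤ 2 * (∫ ω in A, ‖h ω - c‖ ∂μ) / (μ A).toReal :=
        bocce_le_two_mul_setIntegral_norm_sub hh.integrableOn hA₀ hA c
    _ ≤ 2 * ((∫ ω, ‖h ω - h₀ ω‖ ∂μ) + (μ A).toReal * δ) / (μ A).toReal := by gcongr; linarith
    _ = 2 * (∫ ω, ‖h ω - h₀ ω‖ ∂μ) / (μ A).toReal + 2 * δ := by field_simp

end Oscillation

theorem seqBocce_of_strong_conv {Ω E : Type*} [MeasurableSpace Ω] [NormedAddCommGroup E]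
    [NormedSpace ℝ E] [CompleteSpace E] (μ : Measure Ω) [IsProbabilityMeasure μ]
    (f : ℕ → Ω → E) (f₀ : Ω → E) (hf : ∀ k, Integrable (f k) μ) (hf₀ : Integrable f₀ μ)
    (hconv : Filter.Tendsto (fun k => ∫ ω, ‖f k ω - f₀ ω‖ ∂μ) Filter.atTop (nhds 0)) :
    SeqBocceCriterion μ f := by
  intro k hk ε hε B hB hB₀
  obtain ⟨A, hAB, hA, hA₀, c, hc⟩ :=
    exists_subset_ae_norm_sub_le hf₀.aestronglyMeasurable hB hB₀.ne' (by positivity : 0 < ε / 4)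
  refine ⟨A, hAB, hA, hA₀, ?_⟩
  set bound := fun j => 2 * (∫ ω, ‖f (k j) ω - f₀ ω‖ ∂μ) / (μ A).toReal + 2 * (ε / 4)
  have hbound : ∀ j, bocce μ (f (k j)) A ≤ bound j := fun j =>
    bocce_le_of_ae_norm_sub_le (hf (k j)) hf₀ hA₀.ne' hc
  have hlim : Tendsto bound atTop (𝓝 (2 * (ε / 4))) := by
    have := (((hconv.comp hk.tendsto_atTop).const_mul 2).div_const (μ A).toReal).add_const
      (2 * (ε / 4))
    rwa [mul_zero, zero_div, zero_add] at this
  calc liminf (fun j => bocce μ (f (k j)) A) atTop ≤ liminf bound atTop :=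
        liminf_le_liminf (.of_forall hbound)
          ⟨0, eventually_map.2 (.of_forall fun j => bocce_nonneg _ _)⟩ hlim.isCoboundedUnder_ge
    _ = 2 * (ε / 4) := hlim.liminf_eq
    _ < ε := by linarith
end

section
/- If a sequence (f_k) in L¹(μ, E) is uniformly integrable and converges to the null function almost everywhere in the weak topology of E (i.e. there is a full-measure set A such that for every x* ∈ E* and ω ∈ A, x*(f_k(ω)) → 0), then for every function g : Ω × E → ℝ with g(ω,0) = 0, g(ω,·) weakly continuous for each ω, |g(ω,x)| ≤ C‖x‖ + φ(ω) for some C > 0 and φ ∈ L¹(μ, ℝ), and ω ↦ g(ω, f(ω)) measurable for each f ∈ L¹(μ, E), one has ∫_Ω g(ω, f_k(ω)) dμ(ω) → 0. -/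
/-!
The integrands `g (ω, f k ω)` tend to `0` almost everywhere, because `f k ω → 0` weakly and
`g (ω, ·)` is weakly continuous with `g (ω, 0) = 0`. They are dominated by `C ‖f k ω‖ + φ ω`,
a uniformly integrable family, so Vitali's convergence theorem gives convergence of the integrals.
-/

open MeasureTheory Filter Topology

section WeakConvergence

variable {ι 𝕜 E : Type*} [CommSemiring 𝕜] [TopologicalSpace 𝕜] [ContinuousAdd 𝕜]
  [ContinuousConstSMul 𝕜 𝕜] [AddCommMonoid E] [Module 𝕜 E] [TopologicalSpace E]

theorem tendsto_toWeakSpace_of_forall_dual {l : Filter ι} {u : ι → E} {x : E}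
    (h : ∀ x' : StrongDual 𝕜 E, Tendsto (fun i => x' (u i)) l (𝓝 (x' x))) :
    Tendsto (fun i => toWeakSpace 𝕜 E (u i)) l (𝓝 (toWeakSpace 𝕜 E x)) :=
  (IsInducing.induced _).tendsto_nhds_iff.2 (tendsto_pi_nhds.2 h)

end WeakConvergence

namespace MeasureTheory

variable {ι α β γ : Type*} {m : MeasurableSpace α} {μ : Measure α} {p : ENNReal}
  [NormedAddCommGroup β] [NormedAddCommGroup γ]

theorem UnifIntegrable.mono {f : ι → α → β} {g : ι → α → γ} (hg : UnifIntegrable g p μ)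
    (hfg : ∀ i, ∀ᵐ x ∂μ, ‖f i x‖ ≤ ‖g i x‖) : UnifIntegrable f p μ := by
  intro ε hε
  obtain ⟨δ, hδ, hgδ⟩ := hg hε
  refine ⟨δ, hδ, fun i s hs hμs => (eLpNorm_mono_ae ?_).trans (hgδ i s hs hμs)⟩
  filter_upwards [hfg i] with x hx
  by_cases hxs : x ∈ s <;> simp [hxs, hx]

theorem UnifIntegrable.const_smul {𝕜 : Type*} [NormedRing 𝕜] [Module 𝕜 β] [IsBoundedSMul 𝕜 β]
    {f : ι → α → β} (hf : UnifIntegrable f p μ) (c : 𝕜) :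
    UnifIntegrable (fun i => c • f i) p μ := by
  intro ε hε
  obtain ⟨δ, hδ, hfδ⟩ := hf (ε := ε / (‖c‖ + 1)) (by positivity)
  refine ⟨δ, hδ, fun i s hs hμs => ?_⟩
  calc eLpNorm (s.indicator (c • f i)) p μ = eLpNorm (c • s.indicator (f i)) p μ :=
        congrArg (eLpNorm · p μ) (Set.indicator_const_smul s c (f i))
    _ ≤ ‖c‖ₑ * eLpNorm (s.indicator (f i)) p μ :=
        eLpNorm_const_smul_le
    _ ≤ ENNReal.ofReal (‖c‖ + 1) * ENNReal.ofReal (ε / (‖c‖ + 1)) := by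
        gcongr
        · rw [← ofReal_norm]
          exact ENNReal.ofReal_le_ofReal (by linarith)
        · exact hfδ i s hs hμs
    _ = ENNReal.ofReal ε := by
        rw [← ENNReal.ofReal_mul (by positivity), mul_div_cancel₀ _ (by positivity)]

theorem unifIntegrable_one_of_setIntegral_norm_ge_le {f : ι → α → β}
    (hf : ∀ i, Integrable (f i) μ)
    (h : ∀ ε : ℝ, 0 < ε → ∃ c : ℝ, ∀ i, ∫ x in {x | c ≤ ‖f i x‖}, ‖f i x‖ ∂μ ≤ ε) :
    UnifIntegrable f 1 μ := by
  refine unifIntegrable_of le_rfl ENNReal.one_ne_top (fun i => (hf i).1) fun ε hε => ?_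
  obtain ⟨c, hc⟩ := h ε hε
  refine ⟨c.toNNReal, fun i => ?_⟩
  have hset : {x | c.toNNReal ≤ ‖f i x‖₊} = {x | c ≤ ‖f i x‖} := by
    ext x
    simp [Real.toNNReal_le_iff_le_coe]
  rw [hset, eLpNorm_one_eq_lintegral_enorm]
  calc ∫⁻ x, ‖{x | c ≤ ‖f i x‖}.indicator (f i) x‖ₑ ∂μ
      = ∫⁻ x, {x | c ≤ ‖f i x‖}.indicator (fun x => ‖f i x‖ₑ) x ∂μ := by
        simp_rw [enorm_indicator_eq_indicator_enorm]
    _ ≤ ∫⁻ x in {x | c ≤ ‖f i x‖}, ‖f i x‖ₑ ∂μ := lintegral_indicator_le _ _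
    _ = ENNReal.ofReal (∫ x in {x | c ≤ ‖f i x‖}, ‖f i x‖ ∂μ) :=
        (ofReal_integral_norm_eq_lintegral_enorm (hf i).integrableOn).symm
    _ ≤ ENNReal.ofReal ε := ENNReal.ofReal_le_ofReal (hc i)

theorem tendsto_integral_of_unifIntegrable_of_tendsto_ae [IsFiniteMeasure μ] [NormedSpace ℝ β]
    {F : ℕ → α → β} {f : α → β} (hF : ∀ n, Integrable (F n) μ) (hf : Integrable f μ)
    (hui : UnifIntegrable F 1 μ) (hlim : ∀ᵐ x ∂μ, Tendsto (fun n => F n x) atTop (𝓝 (f x))) :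
    Tendsto (fun n => ∫ x, F n x ∂μ) atTop (𝓝 (∫ x, f x ∂μ)) :=
  tendsto_integral_of_L1' f hf.1 (Eventually.of_forall hF) <|
    tendsto_Lp_finite_of_tendsto_ae le_rfl ENNReal.one_ne_top (fun n => (hF n).1)
      (memLp_one_iff_integrable.2 hf) hui hlim

end MeasureTheory

theorem limited_of_ui_ae_weakly_null_general {Ω E : Type*} [MeasurableSpace Ω]
    [NormedAddCommGroup E] [NormedSpace ℝ E]
    (μ : Measure Ω) [IsProbabilityMeasure μ]
    (f : ℕ → Ω → E) (hf : ∀ k, Integrable (f k) μ)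
    -- uniform integrability
    (hui : ∀ ε : ℝ, 0 < ε → ∃ c : ℝ, ∀ k,
      ∫ ω in {ω | c ≤ ‖f k ω‖}, ‖f k ω‖ ∂μ ≤ ε)
    -- almost everywhere weakly null
    (hae : ∃ A : Set Ω, MeasurableSet A ∧ μ Aᶜ = 0 ∧
      ∀ x' : StrongDual ℝ E, ∀ ω ∈ A,
        Filter.Tendsto (fun k => x' (f k ω)) Filter.atTop (nhds 0))
    (g : Ω × E → ℝ)
    (hg0 : ∀ ω, g (ω, 0) = 0)
    (hgw : ∀ ω, Continuous fun x : WeakSpace ℝ E => g (ω, x))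
    (hgb : ∃ C : ℝ, 0 < C ∧ ∃ φ : Ω → ℝ, Integrable φ μ ∧
      ∀ ω x, |g (ω, x)| ≤ C * ‖x‖ + φ ω)
    (hgm : ∀ h : Ω → E, Integrable h μ → Measurable fun ω => g (ω, h ω)) :
    Filter.Tendsto (fun k => ∫ ω, g (ω, f k ω) ∂μ) Filter.atTop (nhds 0) := by
  obtain ⟨C, -, φ, hφ, hgφ⟩ := hgb
  obtain ⟨A, -, hA, hweak⟩ := hae
  have hbound : ∀ k ω, ‖g (ω, f k ω)‖ ≤ C * ‖f k ω‖ + φ ω := fun k ω => hgφ ω (f k ω)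
  have hint : ∀ k, Integrable (fun ω => g (ω, f k ω)) μ := fun k =>
    ((hf k).norm.const_mul C |>.add hφ).mono' (hgm _ (hf k)).aestronglyMeasurable
      (ae_of_all _ (hbound k))
  have hfUI : UnifIntegrable f 1 μ := unifIntegrable_one_of_setIntegral_norm_ge_le hf hui
  have hnormUI : UnifIntegrable (fun k ω => ‖f k ω‖) 1 μ :=
    hfUI.mono fun k => ae_of_all _ fun ω => (norm_norm _).le
  have hdomUI : UnifIntegrable (fun k ω => C * ‖f k ω‖ + φ ω) 1 μ :=
    (hnormUI.const_smul C).add (unifIntegrable_const le_rfl ENNReal.one_ne_top (memLp_one_iff_integrable.2 hφ))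
      le_rfl (fun k => ((hf k).norm.const_mul C).1) fun _ => hφ.1
  have hUI : UnifIntegrable (fun k ω => g (ω, f k ω)) 1 μ :=
    hdomUI.mono fun k => ae_of_all _ fun ω => (hbound k ω).trans (le_abs_self _)
  have hlim : ∀ᵐ ω ∂μ, Tendsto (fun k => g (ω, f k ω)) atTop (𝓝 0) := by
    filter_upwards [mem_ae_iff.2 hA] with ω hω
    have hcomp := (hgw ω).continuousAt.tendsto.comp (tendsto_toWeakSpace_of_forall_dual
      (x := (0 : E)) fun x' => by simpa using hweak x' ω hω)
    rw [← hg0 ω]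
    exact hcomp
  simpa using tendsto_integral_of_unifIntegrable_of_tendsto_ae hint (integrable_zero _ _ μ) hUI hlim

theorem limited_of_ui_ae_weakly_null {Ω E : Type*} [MeasurableSpace Ω]
    [NormedAddCommGroup E] [NormedSpace ℝ E] [CompleteSpace E]
    (μ : Measure Ω) [IsProbabilityMeasure μ]
    (f : ℕ → Ω → E) (hf : ∀ k, Integrable (f k) μ)
    -- uniform integrability
    (hui : ∀ ε : ℝ, 0 < ε → ∃ c : ℝ, ∀ k,
      ∫ ω in {ω | c ≤ ‖f k ω‖}, ‖f k ω‖ ∂μ ≤ ε)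
    -- almost everywhere weakly null
    (hae : ∃ A : Set Ω, MeasurableSet A ∧ μ Aᶜ = 0 ∧
      ∀ x' : StrongDual ℝ E, ∀ ω ∈ A,
        Filter.Tendsto (fun k => x' (f k ω)) Filter.atTop (nhds 0))
    (g : Ω × E → ℝ)
    (hg0 : ∀ ω, g (ω, 0) = 0)
    (hgw : ∀ ω, Continuous fun x : WeakSpace ℝ E => g (ω, x))
    (hgb : ∃ C : ℝ, 0 < C ∧ ∃ φ : Ω → ℝ, Integrable φ μ ∧
      ∀ ω x, |g (ω, x)| ≤ C * ‖x‖ + φ ω)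
    (hgm : ∀ h : Ω → E, Integrable h μ → Measurable fun ω => g (ω, h ω)) :
    Filter.Tendsto (fun k => ∫ ω, g (ω, f k ω) ∂μ) Filter.atTop (nhds 0) :=
  limited_of_ui_ae_weakly_null_general μ f hf hui hae g hg0 hgw hgb hgm
end

section
/- Let (f_k) be a uniformly integrable sequence in L¹(μ, E) and g : Ω × E → ℝ satisfy |g(ω,x)| ≤ C‖x‖ + φ(ω) with C > 0 and φ ∈ L¹. If for every N ∈ ℕ the truncated sequence f_k^N := f_k · 1_{[‖f_k‖ ≤ N]} satisfies ∫ g(ω, f_k^N(ω)) dμ → 0 as k → ∞, then ∫ g(ω, f_k(ω)) dμ → 0. -/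
open MeasureTheory Filter Topology

/-!
Since `g (ω, 0) = 0`, the integral of `g` along `f k` differs from the one along its truncation
at level `N` by the integral of `g (ω, f k ω)` over `{N < ‖f k‖}`, which is at most
`C ∫_{N < ‖f k‖} ‖f k‖ + ∫_{N < ‖f k‖} φ`. Uniform integrability makes the first term small
uniformly in `k` as `N → ∞`; through Markov's inequality it does the same for the measure of
`{N < ‖f k‖}`, hence for the second term by absolute continuity of the integral of `φ`.
So the truncated integrals converge to the full ones uniformly in `k`, and the two limits
can be interchanged.
-/

namespace MeasureTheory

variable {Ω E F : Type*} [MeasurableSpace Ω] [NormedAddCommGroup E] {μ : Measure Ω}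

theorem integral_comp_indicator [NormedAddCommGroup F] [NormedSpace ℝ F] {g : Ω × E → F}
    (hg0 : ∀ ω, g (ω, 0) = 0) {s : Set Ω} (hs : NullMeasurableSet s μ) (h : Ω → E) :
    ∫ ω, g (ω, s.indicator h ω) ∂μ = ∫ ω in s, g (ω, h ω) ∂μ := by
  rw [← integral_indicator₀ hs]
  congr 1 with ω
  by_cases hω : ω ∈ s <;> simp [hω, hg0]

theorem integral_comp_sub_integral_comp_indicator_eq_setIntegral [NormedAddCommGroup F]
    [NormedSpace ℝ F] {g : Ω × E → F} (hg0 : ∀ ω, g (ω, 0) = 0) {h : Ω → E}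
    (hh : AEStronglyMeasurable h μ) (hgh : Integrable (fun ω => g (ω, h ω)) μ) (N : ℝ) :
    ∫ ω, g (ω, h ω) ∂μ - ∫ ω, g (ω, {ω | ‖h ω‖ ≤ N}.indicator h ω) ∂μ =
      ∫ ω in {ω | N < ‖h ω‖}, g (ω, h ω) ∂μ := by
  have hs : NullMeasurableSet {ω | ‖h ω‖ ≤ N} μ :=
    nullMeasurableSet_le hh.norm.aemeasurable aemeasurable_const
  rw [integral_comp_indicator hg0 hs, ← integral_add_compl₀ hs hgh, add_sub_cancel_left]
  simp only [Set.compl_ofPred, not_le]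

theorem abs_setIntegral_comp_le {g : Ω × E → ℝ} {C : ℝ} {φ : Ω → ℝ}
    (hgb : ∀ ω x, |g (ω, x)| ≤ C * ‖x‖ + φ ω) (hφ : Integrable φ μ) {h : Ω → E}
    (hh : Integrable h μ) (s : Set Ω) :
    |∫ ω in s, g (ω, h ω) ∂μ| ≤ C * ∫ ω in s, ‖h ω‖ ∂μ + ∫ ω in s, φ ω ∂μ := by
  rw [← integral_const_mul, ← integral_add (hh.norm.const_mul C).integrableOn hφ.integrableOn]
  exact norm_integral_le_of_norm_le ((hh.norm.const_mul C).add hφ).integrableOn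
    (ae_of_all _ fun ω => (Real.norm_eq_abs _).trans_le (hgb ω (h ω)))

theorem setIntegral_norm_gt_le {h : Ω → E} (hh : Integrable h μ) {c N : ℝ} (hcN : c ≤ N) :
    ∫ ω in {ω | N < ‖h ω‖}, ‖h ω‖ ∂μ ≤ ∫ ω in {ω | c ≤ ‖h ω‖}, ‖h ω‖ ∂μ :=
  setIntegral_mono_set hh.norm.integrableOn (ae_of_all _ fun _ => norm_nonneg _)
    (Eventually.of_forall fun _ hω => hcN.trans (le_of_lt hω))

theorem measure_norm_gt_le {h : Ω → E} (hh : Integrable h μ) {c N : ℝ} (hcN : c ≤ N)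
    (hN : 0 < N) :
    μ {ω | N < ‖h ω‖} ≤ ENNReal.ofReal ((∫ ω in {ω | c ≤ ‖h ω‖}, ‖h ω‖ ∂μ) / N) := by
  set t := {ω | c ≤ ‖h ω‖}
  calc μ {ω | N < ‖h ω‖} ≤ μ.restrict t {ω | ENNReal.ofReal N ≤ ‖h ω‖ₑ} := by
        refine le_trans (measure_mono fun ω hω => ?_) (Measure.le_restrict_apply _ _)
        refine ⟨?_, hcN.trans (le_of_lt hω)⟩
        rw [Set.mem_ofPred_eq, ← ofReal_norm]
        exact ENNReal.ofReal_le_ofReal (le_of_lt hω)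
    _ ≤ (∫⁻ ω in t, ‖h ω‖ₑ ∂μ) / ENNReal.ofReal N :=
        meas_ge_le_lintegral_div hh.1.enorm.restrict (by simpa using hN) ENNReal.ofReal_ne_top
    _ = _ := by
        rw [← ofReal_integral_norm_eq_lintegral_enorm hh.integrableOn,
          ENNReal.ofReal_div_of_pos hN]

theorem integrable_comp_of_abs_le {g : Ω × E → ℝ} {C : ℝ} {φ : Ω → ℝ}
    (hgb : ∀ ω x, |g (ω, x)| ≤ C * ‖x‖ + φ ω) (hφ : Integrable φ μ) {h : Ω → E}
    (hh : Integrable h μ) (hgh : AEStronglyMeasurable (fun ω => g (ω, h ω)) μ) :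
    Integrable (fun ω => g (ω, h ω)) μ :=
  ((hh.norm.const_mul C).add hφ).mono' hgh
    (ae_of_all _ fun ω => (Real.norm_eq_abs _).trans_le (hgb ω (h ω)))

variable {ι : Type*}

def UniformlySmallTails (f : ι → Ω → E) (μ : Measure Ω) : Prop :=
  ∀ ε : ℝ, 0 < ε → ∃ c : ℝ, ∀ i, ∫ ω in {ω | c ≤ ‖f i ω‖}, ‖f i ω‖ ∂μ ≤ ε

namespace UniformlySmallTails

variable {f : ι → Ω → E}

theorem tendsto_setIntegral_norm_gt (hf : ∀ i, Integrable (f i) μ)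
    (hui : UniformlySmallTails f μ) :
    Tendsto (fun p : ℕ × ι => ∫ ω in {ω | (p.1 : ℝ) < ‖f p.2 ω‖}, ‖f p.2 ω‖ ∂μ)
      (atTop ×ˢ ⊤) (𝓝 0) := by
  refine tendsto_order.2 ⟨fun a ha => Eventually.of_forall fun p =>
    ha.trans_le (integral_nonneg fun _ => norm_nonneg _), fun ε hε => ?_⟩
  obtain ⟨c, hc⟩ := hui (ε / 2) (half_pos hε)
  filter_upwards [(tendsto_natCast_atTop_atTop.eventually_ge_atTop c).prod_inl ⊤] with p hp
  exact ((setIntegral_norm_gt_le (hf p.2) hp).trans (hc p.2)).trans_lt (half_lt_self hε)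

theorem tendsto_measure_norm_gt (hf : ∀ i, Integrable (f i) μ)
    (hui : UniformlySmallTails f μ) :
    Tendsto (fun p : ℕ × ι => μ {ω | (p.1 : ℝ) < ‖f p.2 ω‖}) (atTop ×ˢ ⊤) (𝓝 0) := by
  obtain ⟨c, hc⟩ := hui 1 one_pos
  have hbound : Tendsto (fun p : ℕ × ι => ENNReal.ofReal (1 / (p.1 : ℝ))) (atTop ×ˢ ⊤) (𝓝 0) := by
    rw [← ENNReal.ofReal_zero]
    exact (ENNReal.tendsto_ofReal tendsto_one_div_atTop_nhds_zero_nat).comp tendsto_fst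
  refine tendsto_of_tendsto_of_tendsto_of_le_of_le' tendsto_const_nhds hbound
    (Eventually.of_forall fun _ => bot_le) ?_
  filter_upwards [(tendsto_natCast_atTop_atTop.eventually_ge_atTop (max c 1)).prod_inl ⊤]
    with p hp
  have hN : (0 : ℝ) < p.1 := one_pos.trans_le ((le_max_right _ _).trans hp)
  refine (measure_norm_gt_le (hf p.2) ((le_max_left _ _).trans hp) hN).trans ?_
  exact ENNReal.ofReal_le_ofReal (div_le_div_of_nonneg_right (hc p.2) hN.le)

theorem tendstoUniformly_integral_comp_indicator (hf : ∀ i, Integrable (f i) μ)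
    (hui : UniformlySmallTails f μ) {g : Ω × E → ℝ} (hg0 : ∀ ω, g (ω, 0) = 0) {C : ℝ}
    {φ : Ω → ℝ} (hφ : Integrable φ μ) (hgb : ∀ ω x, |g (ω, x)| ≤ C * ‖x‖ + φ ω)
    (hgf : ∀ i, AEStronglyMeasurable (fun ω => g (ω, f i ω)) μ) :
    TendstoUniformly (fun (N : ℕ) i => ∫ ω, g (ω, {ω | ‖f i ω‖ ≤ N}.indicator (f i) ω) ∂μ)
      (fun i => ∫ ω, g (ω, f i ω) ∂μ) atTop := by
  rw [tendstoUniformly_iff_tendsto, Metric.uniformity_eq_comap_nhds_zero, tendsto_comap_iff]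
  have hbound := ((hui.tendsto_setIntegral_norm_gt hf).const_mul C).add
    (hφ.tendsto_setIntegral_nhds_zero (hui.tendsto_measure_norm_gt hf))
  rw [mul_zero, add_zero] at hbound
  refine squeeze_zero (fun _ => dist_nonneg) (fun p => ?_) hbound
  rw [Function.comp_apply, Real.dist_eq,
    integral_comp_sub_integral_comp_indicator_eq_setIntegral hg0
    (hf p.2).1 (integrable_comp_of_abs_le hgb hφ (hf p.2) (hgf p.2))]
  exact abs_setIntegral_comp_le hgb hφ (hf p.2) _

end UniformlySmallTails

end MeasureTheory

theorem limited_of_truncated_limited_general {Ω E : Type*} [MeasurableSpace Ω]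
    [NormedAddCommGroup E]
    (μ : Measure Ω)
    (f : ℕ → Ω → E) (hf : ∀ k, Integrable (f k) μ)
    -- uniform integrability
    (hui : ∀ ε : ℝ, 0 < ε → ∃ c : ℝ, ∀ k,
      ∫ ω in {ω | c ≤ ‖f k ω‖}, ‖f k ω‖ ∂μ ≤ ε)
    (g : Ω × E → ℝ)
    (hg0 : ∀ ω, g (ω, 0) = 0)
    (hgb : ∃ C : ℝ, 0 < C ∧ ∃ φ : Ω → ℝ, Integrable φ μ ∧
      ∀ ω x, |g (ω, x)| ≤ C * ‖x‖ + φ ω)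
    (hgm : ∀ h : Ω → E, Integrable h μ → Measurable fun ω => g (ω, h ω))
    -- each truncated sequence converges limitedly (against `g`) to 0
    (htrunc : ∀ N : ℕ, Filter.Tendsto
      (fun k => ∫ ω, g (ω, Set.indicator {ω | ‖f k ω‖ ≤ (N : ℝ)} (f k) ω) ∂μ)
      Filter.atTop (nhds 0)) :
    Filter.Tendsto (fun k => ∫ ω, g (ω, f k ω) ∂μ) Filter.atTop (nhds 0) := by
  obtain ⟨C, -, φ, hφ, hgb⟩ := hgb
  have hunif := UniformlySmallTails.tendstoUniformly_integral_comp_indicator hf hui hg0 hφ hgb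
    fun k => (hgm (f k) (hf k)).aestronglyMeasurable
  exact hunif.tendsto_of_eventually_tendsto (Eventually.of_forall htrunc) tendsto_const_nhds

theorem limited_of_truncated_limited {Ω E : Type*} [MeasurableSpace Ω]
    [NormedAddCommGroup E] [NormedSpace ℝ E] [CompleteSpace E]
    (μ : Measure Ω) [IsProbabilityMeasure μ]
    (f : ℕ → Ω → E) (hf : ∀ k, Integrable (f k) μ)
    -- uniform integrability
    (hui : ∀ ε : ℝ, 0 < ε → ∃ c : ℝ, ∀ k,
      ∫ ω in {ω | c ≤ ‖f k ω‖}, ‖f k ω‖ ∂μ ≤ ε)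
    (g : Ω × E → ℝ)
    (hg0 : ∀ ω, g (ω, 0) = 0)
    (hgb : ∃ C : ℝ, 0 < C ∧ ∃ φ : Ω → ℝ, Integrable φ μ ∧
      ∀ ω x, |g (ω, x)| ≤ C * ‖x‖ + φ ω)
    (hgm : ∀ h : Ω → E, Integrable h μ → Measurable fun ω => g (ω, h ω))
    -- each truncated sequence converges limitedly (against `g`) to 0
    (htrunc : ∀ N : ℕ, Filter.Tendsto
      (fun k => ∫ ω, g (ω, Set.indicator {ω | ‖f k ω‖ ≤ (N : ℝ)} (f k) ω) ∂μ)
      Filter.atTop (nhds 0)) :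
    Filter.Tendsto (fun k => ∫ ω, g (ω, f k ω) ∂μ) Filter.atTop (nhds 0) :=
  limited_of_truncated_limited_general μ f hf hui g hg0 hgb hgm htrunc
end

section
/- Let E be a Banach space with separable dual E*. If a uniformly bounded sequence (f_k) in L¹(μ, E) converges scalarly in measure to 0 (i.e. x*(f_k) → 0 in measure for each x* ∈ E*), then some subsequence (f_{k_p}) is almost everywhere weakly null: there is a full-measure set A such that x*(f_{k_p}(ω)) → 0 for every x* ∈ E* and every ω ∈ A. -/
/-!
Fix a dense sequence `(D n)` in the dual. Choosing `k p` so that each of `D 0, …, D p` applied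
to `f (k p)` is at least `2⁻ᵖ` only on a set of measure at most `2⁻ᵖ`, Borel–Cantelli makes every
`D n (f (k p))` tend to `0` almost everywhere. On the full-measure set where moreover all `f j`
are bounded by `M`, the maps `x' ↦ x' (f (k p) ω)` are equicontinuous, so the set of `x'` along
which they tend to `0` is closed; it contains the dense range of `D`, hence is everything.
-/

open MeasureTheory Filter Topology
open scoped ENNReal

theorem exists_seq_forall_tendsto_ae_of_tendstoInMeasure {α E : Type*} [MeasurableSpace α]
    [PseudoEMetricSpace E] {μ : Measure α} {g : ℕ → ℕ → α → E} {l : ℕ → α → E}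
    (hg : ∀ n, TendstoInMeasure μ (g n) atTop (l n)) :
    ∃ k : ℕ → ℕ, StrictMono k ∧
      ∀ᵐ x ∂μ, ∀ n, Tendsto (fun p ↦ g n (k p) x) atTop (𝓝 (l n x)) := by
  have hsmall : ∀ p, ∀ᶠ j in atTop, ∀ n ∈ Finset.range (p + 1),
      μ {x | 2⁻¹ ^ p ≤ edist (g n j x) (l n x)} ≤ 2⁻¹ ^ p := fun p ↦
    (eventually_all_finset _).2 fun n _ ↦
      (hg n _ (ENNReal.pow_pos (by norm_num) p)).eventually
        (Iic_mem_nhds (ENNReal.pow_pos (by norm_num) p))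
  obtain ⟨k, hk, hkp⟩ := extraction_forall_of_eventually hsmall
  refine ⟨k, hk, ae_all_iff.2 fun n ↦ ?_⟩
  let s p := {x | n ≤ p ∧ 2⁻¹ ^ p ≤ edist (g n (k p) x) (l n x)}
  have hs : ∀ p, μ (s p) ≤ 2⁻¹ ^ p := by
    intro p
    by_cases hnp : n ≤ p
    · exact (measure_mono fun x hx ↦ hx.2).trans (hkp p n (by simpa [Nat.lt_succ_iff]))
    · simp [s, hnp]
  have hsum : ∑' p, μ (s p) ≠ ∞ :=
    ne_top_of_le_ne_top (tsum_geometric_lt_top.2 (by norm_num)).ne (ENNReal.tsum_le_tsum hs)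
  filter_upwards [ae_eventually_notMem hsum] with x hx
  rw [tendsto_iff_edist_tendsto_0]
  refine tendsto_of_tendsto_of_tendsto_of_le_of_le' tendsto_const_nhds
    (ENNReal.tendsto_pow_atTop_nhds_zero_of_lt_one (by norm_num : (2⁻¹ : ℝ≥0∞) < 1))
    (.of_forall fun _ ↦ zero_le) ?_
  filter_upwards [hx, eventually_ge_atTop n] with p hp hnp
  simp only [s, Set.mem_ofPred_eq, hnp, true_and, not_le] at hp
  exact hp.le

theorem tendsto_apply_zero_of_denseRange {𝕜 E ι κ : Type*} [NontriviallyNormedField 𝕜]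
    [SeminormedAddCommGroup E] [NormedSpace 𝕜 E] {l : Filter ι} {v : ι → E} {M : ℝ}
    (hv : ∀ i, ‖v i‖ ≤ M) {D : κ → StrongDual 𝕜 E} (hD : DenseRange D)
    (h : ∀ n, Tendsto (fun i ↦ D n (v i)) l (𝓝 0)) (x' : StrongDual 𝕜 E) :
    Tendsto (fun i ↦ x' (v i)) l (𝓝 0) := by
  have hbound : ∃ C, ∀ i (y : StrongDual 𝕜 E), ‖y (v i)‖ ≤ C * ‖y‖ :=
    ⟨M, fun i y ↦ (y.le_opNorm (v i)).trans <| by rw [mul_comm]; gcongr; exact hv i⟩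
  have hequi : Equicontinuous fun i (y : StrongDual 𝕜 E) ↦ y (v i) :=
    ((NormedSpace.equicontinuous_TFAE fun i ↦ ContinuousLinearMap.apply 𝕜 𝕜 (v i)).out 3 1).1
      hbound
  exact hD.induction_on (p := fun y ↦ Tendsto (fun i ↦ y (v i)) l (𝓝 0)) x'
    (hequi.isClosed_setOfPred_tendsto continuous_const) h

theorem exists_subseq_ae_weakly_null_general {Ω E : Type*} [MeasurableSpace Ω]
    [NormedAddCommGroup E] [NormedSpace ℝ E]
    [TopologicalSpace.SeparableSpace (StrongDual ℝ E)]
    (μ : Measure Ω)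
    (f : ℕ → Ω → E)
    -- uniform boundedness
    (hbdd : ∃ M : ℝ, ∀ k, ∀ᵐ ω ∂μ, ‖f k ω‖ ≤ M)
    -- scalar convergence in measure to 0
    (hmeas : ∀ x' : StrongDual ℝ E, ∀ δ : ℝ, 0 < δ →
      Filter.Tendsto (fun k => μ {ω | δ ≤ |x' (f k ω)|}) Filter.atTop (nhds 0)) :
    ∃ k : ℕ → ℕ, StrictMono k ∧ ∃ A : Set Ω, MeasurableSet A ∧ μ Aᶜ = 0 ∧
      ∀ x' : StrongDual ℝ E, ∀ ω ∈ A,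
        Filter.Tendsto (fun p => x' (f (k p) ω)) Filter.atTop (nhds 0) := by
  obtain ⟨M, hM⟩ := hbdd
  obtain ⟨D, hD⟩ := TopologicalSpace.exists_dense_seq (StrongDual ℝ E)
  have hD_meas : ∀ n, TendstoInMeasure μ (fun j ω ↦ D n (f j ω)) atTop 0 := fun n ↦
    tendstoInMeasure_iff_norm.2 fun δ hδ ↦ by simpa using hmeas (D n) δ hδ
  obtain ⟨k, hk, hD_ae⟩ := exists_seq_forall_tendsto_ae_of_tendstoInMeasure hD_meas
  obtain ⟨N, hN, hN_meas, hN_null⟩ :=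
    exists_measurable_superset_of_null (ae_iff.1 (hD_ae.and (ae_all_iff.2 hM)))
  refine ⟨k, hk, Nᶜ, hN_meas.compl, by rwa [compl_compl], fun x' ω hω ↦ ?_⟩
  obtain ⟨hD_tendsto, hω_bdd⟩ := not_not.1 fun h ↦ hω (hN h)
  exact tendsto_apply_zero_of_denseRange (fun p ↦ hω_bdd (k p)) hD hD_tendsto x'

theorem exists_subseq_ae_weakly_null {Ω E : Type*} [MeasurableSpace Ω]
    [NormedAddCommGroup E] [NormedSpace ℝ E] [CompleteSpace E]
    [TopologicalSpace.SeparableSpace (StrongDual ℝ E)]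
    (μ : Measure Ω) [IsProbabilityMeasure μ]
    (f : ℕ → Ω → E) (hf : ∀ k, Integrable (f k) μ)
    -- uniform boundedness
    (hbdd : ∃ M : ℝ, ∀ k, ∀ᵐ ω ∂μ, ‖f k ω‖ ≤ M)
    -- scalar convergence in measure to 0
    (hmeas : ∀ x' : StrongDual ℝ E, ∀ δ : ℝ, 0 < δ →
      Filter.Tendsto (fun k => μ {ω | δ ≤ |x' (f k ω)|}) Filter.atTop (nhds 0)) :
    ∃ k : ℕ → ℕ, StrictMono k ∧ ∃ A : Set Ω, MeasurableSet A ∧ μ Aᶜ = 0 ∧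
      ∀ x' : StrongDual ℝ E, ∀ ω ∈ A,
        Filter.Tendsto (fun p => x' (f (k p) ω)) Filter.atTop (nhds 0) :=
  exists_subseq_ae_weakly_null_general μ f hbdd hmeas
end

section
/- Let E = ℓ² and (e_k) its standard unit vector basis, and let μ be Lebesgue measure on [0,1]. The sequence f_k(ω) := 2^k · 1_{[0, 2^{-k})}(ω) · e_k converges scalarly strongly to 0 (i.e. ∫ |y*(f_k)| dμ → 0 for every y* ∈ ℓ²), but does not converge to 0 in L¹(μ, ℓ²) norm. -/
open MeasureTheory Filter Topology

/-- The standard unit vectors of `ℓ²`. -/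
noncomputable def e2 (k : ℕ) : lp (fun _ : ℕ => ℝ) 2 := lp.single 2 k 1

/-- `f_k = 2^k ⬝ 1_{[0,2^{-k})} ⬝ e_k`. -/
noncomputable def fex12 (k : ℕ) : ℝ → lp (fun _ : ℕ => ℝ) 2 :=
  Set.indicator (Set.Ico (0 : ℝ) ((2 : ℝ)⁻¹ ^ k)) (fun _ => (2 : ℝ) ^ k • e2 k)

/-! The norm of `f_k` has integral `1` for every `k`. Against a fixed `y' ∈ (ℓ²)*`, represented by
`w ∈ ℓ²` through the Riesz isomorphism, the integral of `|y' (f_k)|` is `|⟪w, e_k⟫| = |w k|`,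
which tends to `0` by Bessel's inequality. -/

theorem Orthonormal.tendsto_cofinite_dual_apply {𝕜 ι E : Type*} [RCLike 𝕜]
    [NormedAddCommGroup E] [InnerProductSpace 𝕜 E] [CompleteSpace E] {v : ι → E}
    (hv : Orthonormal 𝕜 v) (y' : StrongDual 𝕜 E) :
    Tendsto (fun i => y' (v i)) cofinite (𝓝 0) := by
  set w := (InnerProductSpace.toDual 𝕜 E).symm y'
  have hsq : Tendsto (fun i => ‖inner 𝕜 (v i) w‖ ^ 2) cofinite (𝓝 0) :=
    (hv.inner_products_summable w).tendsto_cofinite_zero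
  have hnorm : Tendsto (fun i => ‖inner 𝕜 (v i) w‖) cofinite (𝓝 0) := by
    simpa only [Real.sqrt_zero, Real.sqrt_sq (norm_nonneg _)] using hsq.sqrt
  rw [tendsto_zero_iff_norm_tendsto_zero]
  simpa only [← InnerProductSpace.toDual_symm_apply (y := y'), norm_inner_symm] using hnorm

theorem orthonormal_e2 : Orthonormal ℝ e2 := by
  rw [orthonormal_iff_ite]
  intro i j
  simp [e2, lp.inner_single_left, Pi.single_apply]

theorem setIntegral_Icc_indicator_Ico_const {E : Type*} [NormedAddCommGroup E]
    [NormedSpace ℝ E] [CompleteSpace E] {a : ℝ} (ha₀ : 0 ≤ a) (ha₁ : a ≤ 1) (c : E) :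
    ∫ ω in Set.Icc (0 : ℝ) 1, (Set.Ico 0 a).indicator (fun _ => c) ω = a • c := by
  rw [integral_indicator_const c measurableSet_Ico,
    measureReal_restrict_apply measurableSet_Ico,
    Set.inter_eq_left.2 (Set.Ico_subset_Icc_self.trans (Set.Icc_subset_Icc_right ha₁)),
    Real.volume_real_Ico_of_le ha₀, sub_zero]

theorem setIntegral_Icc_comp_fex12 {g : lp (fun _ : ℕ => ℝ) 2 → ℝ} (hg : g 0 = 0) (k : ℕ) :
    ∫ ω in Set.Icc (0 : ℝ) 1, g (fex12 k ω) = (2 : ℝ)⁻¹ ^ k * g ((2 : ℝ) ^ k • e2 k) := by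
  have hcomp : (fun ω => g (fex12 k ω))
      = (Set.Ico (0 : ℝ) ((2 : ℝ)⁻¹ ^ k)).indicator (fun _ => g ((2 : ℝ) ^ k • e2 k)) :=
    (Set.indicator_comp_of_zero hg).symm
  rw [hcomp, setIntegral_Icc_indicator_Ico_const (by positivity)
    (pow_le_one₀ (by norm_num) (by norm_num)), smul_eq_mul]

theorem scalarly_strong_not_strong :
    (∀ y' : StrongDual ℝ (lp (fun _ : ℕ => ℝ) 2),
      Filter.Tendsto
        (fun k => ∫ ω in Set.Icc (0 : ℝ) 1, |y' (fex12 k ω)|) Filter.atTop (nhds 0)) ∧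
    ¬ Filter.Tendsto
        (fun k => ∫ ω in Set.Icc (0 : ℝ) 1, ‖fex12 k ω‖) Filter.atTop (nhds 0) := by
  have hscale (k : ℕ) (r : ℝ) : (2 : ℝ)⁻¹ ^ k * ((2 : ℝ) ^ k * r) = r := by
    rw [← mul_assoc, ← mul_pow, inv_mul_cancel₀ two_ne_zero, one_pow, one_mul]
  constructor
  · intro y'
    have hint (k : ℕ) : ∫ ω in Set.Icc (0 : ℝ) 1, |y' (fex12 k ω)| = |y' (e2 k)| := by
      rw [setIntegral_Icc_comp_fex12 (g := fun x => |y' x|) (by simp), map_smul, smul_eq_mul,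
        abs_mul, abs_of_pos (by positivity), hscale]
    have hweak := orthonormal_e2.tendsto_cofinite_dual_apply y'
    rw [Nat.cofinite_eq_atTop] at hweak
    simpa only [hint, abs_zero] using hweak.abs
  · have hint (k : ℕ) : ∫ ω in Set.Icc (0 : ℝ) 1, ‖fex12 k ω‖ = 1 := by
      rw [setIntegral_Icc_comp_fex12 norm_zero, norm_smul, orthonormal_e2.1 k,
        Real.norm_of_nonneg (by positivity), hscale]
    simpa only [hint, tendsto_const_nhds_iff] using one_ne_zero
end

section
/- Let E be a separable Banach space and (f_k) a sequence in L¹(μ, E) converging in measure to f₀. Then (f_k) is tight: for each ε > 0 there exists a measurable multifunction F_ε from Ω to the compact subsets of E such that μ({ω : f_k(ω) ∉ F_ε(ω)}) ≤ ε for all k. -/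
/-!
Choose `r k → 0` so slowly that, from some index `N` on, the sets `{r k ≤ dist (f k) f₀}` have
measure at most `ε`. For `k ≥ N`, replace `f k` by `f₀` on that set. The modified sequence `g`
converges to `f₀` at every point, so `F ω = {f₀ ω} ∪ {g k ω | k}` is compact, and `f k ω ∈ F ω`
outside a set of measure at most `ε`.
-/

open MeasureTheory Filter Topology Set
open scoped ENNReal

theorem exists_tendsto_atTop_eventually_of_forall_eventually {P : ℕ → ℕ → Prop}
    (h : ∀ n, ∀ᶠ k in atTop, P n k) :
    ∃ φ : ℕ → ℕ, Tendsto φ atTop atTop ∧ ∀ᶠ k in atTop, P (φ k) k := by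
  simp only [eventually_atTop] at h
  choose N hN using h
  -- `φ k` is the largest `n ≤ k` whose threshold `N n` has been passed by `k`
  refine ⟨fun k => Nat.findGreatest (fun n => N n ≤ k) k, ?_,
    eventually_atTop.2 ⟨N 0, fun k hk => ?_⟩⟩
  · exact tendsto_atTop_atTop.2 fun n => ⟨max (N n) n, fun k hk =>
      Nat.le_findGreatest (le_of_max_le_right hk) (le_of_max_le_left hk)⟩
  · exact hN _ _ (Nat.findGreatest_spec (P := fun n => N n ≤ k) (Nat.zero_le k) hk)

theorem exists_tendsto_zero_eventually_of_forall_pos {P : ℝ → ℕ → Prop}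
    (h : ∀ δ : ℝ, 0 < δ → ∀ᶠ k in atTop, P δ k) :
    ∃ r : ℕ → ℝ, Tendsto r atTop (𝓝 0) ∧ ∀ᶠ k in atTop, P (r k) k := by
  obtain ⟨φ, hφ, hP⟩ := exists_tendsto_atTop_eventually_of_forall_eventually
    (P := fun n => P (1 / ((n : ℝ) + 1))) fun n => h _ Nat.one_div_pos_of_nat
  exact ⟨fun k => 1 / ((φ k : ℝ) + 1), tendsto_one_div_add_atTop_nhds_zero_nat.comp hφ, hP⟩

theorem tendsto_ite_of_eventually_dist_lt {α : Type*} [PseudoMetricSpace α] {u : ℕ → α} {a : α}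
    {r : ℕ → ℝ} {p : ℕ → Prop} [DecidablePred p] (hr : Tendsto r atTop (𝓝 0))
    (hp : ∀ᶠ k in atTop, p k → dist (u k) a < r k) :
    Tendsto (fun k => if p k then u k else a) atTop (𝓝 a) := by
  refine Metric.tendsto_nhds.2 fun ε hε => ?_
  filter_upwards [hp, hr.eventually_lt_const hε] with k hpk hrk
  split_ifs with hk
  · exact (hpk hk).trans hrk
  · simpa using hε

theorem measurableSet_graph_insert_range {Ω E : Type*} [MeasurableSpace Ω] [MeasurableSpace E]
    [MeasurableEq E] {g₀ : Ω → E} {g : ℕ → Ω → E} (hg₀ : Measurable g₀)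
    (hg : ∀ k, Measurable (g k)) :
    MeasurableSet {p : Ω × E | p.2 ∈ insert (g₀ p.1) (range fun k => g k p.1)} := by
  simp only [mem_insert_iff, mem_range, ofPred_or, ofPred_exists]
  exact (measurableSet_eq_fun measurable_snd (hg₀.comp measurable_fst)).union <|
    .iUnion fun k => measurableSet_eq_fun ((hg k).comp measurable_fst) measurable_snd

theorem MeasureTheory.TendstoInMeasure.exists_isCompact_measurableSet_graph
    {Ω E : Type*} [MeasurableSpace Ω] [MetricSpace E] [SecondCountableTopology E]
    [MeasurableSpace E] [OpensMeasurableSpace E] {μ : Measure Ω} {f : ℕ → Ω → E} {f₀ : Ω → E}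
    (hf : ∀ k, Measurable (f k)) (hf₀ : Measurable f₀) (hconv : TendstoInMeasure μ f atTop f₀)
    {ε : ℝ≥0∞} (hε : 0 < ε) :
    ∃ F : Ω → Set E, (∀ ω, IsCompact (F ω)) ∧ MeasurableSet {p : Ω × E | p.2 ∈ F p.1} ∧
      ∀ k, μ {ω | f k ω ∉ F ω} ≤ ε := by
  classical
  obtain ⟨r, hr, hrε⟩ := exists_tendsto_zero_eventually_of_forall_pos fun δ hδ =>
    (tendstoInMeasure_iff_dist.1 hconv δ hδ).eventually_le_const hε
  obtain ⟨N, hN⟩ := eventually_atTop.1 hrε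
  let keep (k : ℕ) (ω : Ω) : Prop := k < N ∨ dist (f k ω) (f₀ ω) < r k
  let g (k : ℕ) (ω : Ω) : E := if keep k ω then f k ω else f₀ ω
  have hg_tendsto (ω : Ω) : Tendsto (fun k => g k ω) atTop (𝓝 (f₀ ω)) :=
    tendsto_ite_of_eventually_dist_lt hr <| eventually_atTop.2
      ⟨N, fun k hk hkeep => hkeep.resolve_left hk.not_gt⟩
  have hg_meas (k : ℕ) : Measurable (g k) :=
    Measurable.ite ((MeasurableSet.const _).union
      (measurableSet_lt ((hf k).dist hf₀) measurable_const)) (hf k) hf₀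
  refine ⟨fun ω => insert (f₀ ω) (range fun k => g k ω),
    fun ω => (hg_tendsto ω).isCompact_insert_range,
    measurableSet_graph_insert_range hf₀ hg_meas, fun k => ?_⟩
  have hsub : {ω | f k ω ∉ insert (f₀ ω) (range fun j => g j ω)} ⊆ {ω | ¬keep k ω} :=
    fun ω hω hkeep => hω (mem_insert_of_mem _ ⟨k, if_pos hkeep⟩)
  refine (measure_mono hsub).trans ?_
  rcases lt_or_ge k N with hk | hk
  · simp [keep, hk]
  · exact (measure_mono fun ω hω => not_lt.1 (not_or.1 hω).2).trans (hN k hk)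

theorem tight_of_conv_in_measure_general {Ω E : Type*} [MeasurableSpace Ω]
    [NormedAddCommGroup E]
    [TopologicalSpace.SeparableSpace E] [MeasurableSpace E] [BorelSpace E]
    (μ : Measure Ω)
    (f : ℕ → Ω → E) (f₀ : Ω → E) (hf : ∀ k, Integrable (f k) μ) (hf₀ : Integrable f₀ μ)
    -- convergence in measure
    (hmeas : ∀ δ : ℝ, 0 < δ →
      Filter.Tendsto (fun k => μ {ω | δ ≤ ‖f k ω - f₀ ω‖}) Filter.atTop (nhds 0)) :
    ∀ ε : ℝ, 0 < ε → ∃ F : Ω → Set E,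
      (∀ ω, IsCompact (F ω)) ∧
      MeasurableSet {p : Ω × E | p.2 ∈ F p.1} ∧
      ∀ k, μ {ω | f k ω ∉ F ω} ≤ ENNReal.ofReal ε := by
  intro ε hε
  have : SecondCountableTopology E := UniformSpace.secondCountable_of_separable E
  let g (k : ℕ) : Ω → E := (hf k).aemeasurable.mk (f k)
  have hfg (k : ℕ) : f k =ᵐ[μ] g k := (hf k).aemeasurable.ae_eq_mk
  have hconv : TendstoInMeasure μ g atTop (hf₀.aemeasurable.mk f₀) :=
    (tendstoInMeasure_iff_norm.2 hmeas).congr hfg hf₀.aemeasurable.ae_eq_mk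
  obtain ⟨F, hF_compact, hF_graph, hF_measure⟩ := hconv.exists_isCompact_measurableSet_graph
    (fun k => (hf k).aemeasurable.measurable_mk) hf₀.aemeasurable.measurable_mk
    (ENNReal.ofReal_pos.2 hε)
  refine ⟨F, hF_compact, hF_graph, fun k => ?_⟩
  calc μ {ω | f k ω ∉ F ω} = μ {ω | g k ω ∉ F ω} :=
        measure_congr <| (hfg k).mono fun ω hω => congrArg (· ∉ F ω) hω
    _ ≤ ENNReal.ofReal ε := hF_measure k

theorem tight_of_conv_in_measure {Ω E : Type*} [MeasurableSpace Ω]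
    [NormedAddCommGroup E] [NormedSpace ℝ E] [CompleteSpace E]
    [TopologicalSpace.SeparableSpace E] [MeasurableSpace E] [BorelSpace E]
    (μ : Measure Ω) [IsProbabilityMeasure μ]
    (f : ℕ → Ω → E) (f₀ : Ω → E) (hf : ∀ k, Integrable (f k) μ) (hf₀ : Integrable f₀ μ)
    -- convergence in measure
    (hmeas : ∀ δ : ℝ, 0 < δ →
      Filter.Tendsto (fun k => μ {ω | δ ≤ ‖f k ω - f₀ ω‖}) Filter.atTop (nhds 0)) :
    ∀ ε : ℝ, 0 < ε → ∃ F : Ω → Set E,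
      (∀ ω, IsCompact (F ω)) ∧
      MeasurableSet {p : Ω × E | p.2 ∈ F p.1} ∧
      ∀ k, μ {ω | f k ω ∉ F ω} ≤ ENNReal.ofReal ε :=
  tight_of_conv_in_measure_general μ f f₀ hf hf₀ hmeas
end

section
/- Let E be a separable Banach space and L a uniformly integrable, tight subset of L¹(μ, E). Then for every measurable set B with μ(B) > 0, the set Δ_B := {m_B(f) : f ∈ L} of averages is relatively norm compact in E. -/
/-!
Uniform integrability lets one discard, at cost `ε`, the part of each `f ∈ L` where `‖f‖ ≥ c`.
Tightness puts every `f ∈ L` into compact sets `F ω` up to measure `δ`. Exhausting `E` by the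
`r`-neighbourhoods of initial segments of a dense sequence, a diagonal argument over countably
many `f` turns this into one finite set `P` such that every `f ∈ L` stays within `r` of `P` off
a set of measure `2δ`. Where `f` is near `P`, its integral lies in the closed `r`-neighbourhood of
the compact set `convexHull ℝ (insert 0 P)`; the rest contributes at most `ε + 2cδ`. Hence the
integrals over `B`, and with them the averages, are totally bounded.
-/

open MeasureTheory Filter Topology

open Metric Set TopologicalSpace
open scoped ENNReal

theorem totallyBounded_of_forall_subset_cthickening_isCompact {X : Type*} [PseudoMetricSpace X]
    {s : Set X} (h : ∀ ε > 0, ∃ K, IsCompact K ∧ s ⊆ cthickening ε K) : TotallyBounded s := by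
  refine Metric.totallyBounded_iff.2 fun ε hε => ?_
  obtain ⟨K, hK, hsK⟩ := h (ε / 3) (by positivity)
  obtain ⟨t, ht, hKt⟩ := Metric.totallyBounded_iff.1 hK.totallyBounded (ε / 3) (by positivity)
  refine ⟨t, ht, fun x hx => ?_⟩
  obtain ⟨y, hyK, hxy⟩ := mem_thickening_iff.1 <|
    cthickening_subset_thickening' (by positivity) (by linarith : ε / 3 < 2 * ε / 3) K (hsK hx)
  obtain ⟨z, hzt, hyz⟩ := mem_iUnion₂.1 (hKt hyK)
  rw [mem_ball] at hyz
  exact mem_iUnion₂.2 ⟨z, hzt, mem_ball.2 (by linarith [dist_triangle x y z])⟩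

theorem IsCompact.exists_subset_thickening_denseSeq {X : Type*} [PseudoMetricSpace X]
    [SeparableSpace X] [Nonempty X] {K : Set X} (hK : IsCompact K) {r : ℝ} (hr : 0 < r) :
    ∃ n, K ⊆ thickening r (denseSeq X '' Iic n) := by
  refine hK.elim_directed_cover _ (fun n => isOpen_thickening) (fun x _ => ?_)
    (Monotone.directed_le fun m n hmn =>
      thickening_subset_of_subset r (image_mono (Iic_subset_Iic.2 hmn)))
  obtain ⟨j, hj⟩ := (denseRange_denseSeq X).exists_dist_lt x hr
  exact mem_iUnion.2 ⟨j, mem_thickening_iff.2 ⟨_, mem_image_of_mem _ (mem_Iic.2 le_rfl), hj⟩⟩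

namespace MeasureTheory

variable {Ω : Type*} [MeasurableSpace Ω] {μ : Measure Ω}

theorem exists_forall_measure_compl_le_of_exhaustion [IsFiniteMeasure μ] {ι : Type*}
    {A : ι → ℕ → Set Ω} (hAm : ∀ i n, MeasurableSet (A i n)) (hA : ∀ i, Monotone (A i))
    (hcover : ∀ ω, ∃ n, ∀ i, ω ∈ A i n) {δ : ℝ≥0∞} (hδ : δ ≠ 0) :
    ∃ n, ∀ i, μ (A i n)ᶜ ≤ δ := by
  by_contra! hbad
  choose i hi using hbad
  -- a countable intersection, hence measurable, unlike `⋂ i, A i n`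
  set C : ℕ → Set Ω := fun n => ⋂ k, A (i k) n
  have hCempty : ⋂ n, (C n)ᶜ = ∅ := by
    refine eq_empty_iff_forall_notMem.2 fun ω hω => ?_
    obtain ⟨n, hn⟩ := hcover ω
    exact mem_iInter.1 hω n (mem_iInter.2 fun k => hn (i k))
  have hC : Tendsto (fun n => μ (C n)ᶜ) atTop (𝓝 0) := by
    have h := tendsto_measure_iInter_atTop (μ := μ) (s := fun n => (C n)ᶜ)
      (fun n => (MeasurableSet.iInter fun k => hAm (i k) n).compl.nullMeasurableSet)
      (fun m n hmn => compl_subset_compl.2 (iInter_mono fun k => hA (i k) hmn))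
      ⟨0, measure_ne_top μ _⟩
    rwa [hCempty, measure_empty] at h
  obtain ⟨n, hn⟩ := (hC.eventually (Iio_mem_nhds (pos_iff_ne_zero.2 hδ))).exists
  exact (hi n).not_ge
    ((measure_mono (compl_subset_compl.2 (iInter_subset (fun k => A (i k) n) n))).trans hn.le)

theorem exists_finite_forall_measure_notMem_thickening_le [IsFiniteMeasure μ] {E : Type*}
    [PseudoMetricSpace E] [SeparableSpace E] [Nonempty E] [MeasurableSpace E]
    [OpensMeasurableSpace E] {L : Set (Ω → E)} (hLm : ∀ f ∈ L, Measurable f)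
    {F : Ω → Set E} (hF : ∀ ω, IsCompact (F ω)) (hFm : MeasurableSet {p : Ω × E | p.2 ∈ F p.1})
    {δ : ℝ≥0∞} (hFδ : ∀ f ∈ L, μ {ω | f ω ∉ F ω} ≤ δ) {r : ℝ} (hr : 0 < r) {δ' : ℝ≥0∞}
    (hδ' : δ' ≠ 0) :
    ∃ P : Set E, P.Finite ∧ ∀ f ∈ L, μ {ω | f ω ∉ thickening r P} ≤ δ + δ' := by
  set U : ℕ → Set E := fun n => thickening r (denseSeq E '' Iic n)
  obtain ⟨n, hn⟩ := exists_forall_measure_compl_le_of_exhaustion (μ := μ)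
    (A := fun (f : L) n => {ω | f.1 ω ∈ F ω → f.1 ω ∈ U n})
    (fun f n => ((measurable_id.prodMk (hLm f f.2)) hFm).imp
      (hLm f f.2 isOpen_thickening.measurableSet))
    (fun f m n hmn ω hω hfω =>
      thickening_subset_of_subset r (image_mono (Iic_subset_Iic.2 hmn)) (hω hfω))
    (fun ω => (hF ω).exists_subset_thickening_denseSeq hr |>.imp fun n hn _ hfω => hn hfω) hδ'
  refine ⟨denseSeq E '' Iic n, (finite_Iic n).image _, fun f hf => ?_⟩
  calc μ {ω | f ω ∉ U n}
      ≤ μ ({ω | f ω ∉ F ω} ∪ {ω | f ω ∈ F ω → f ω ∈ U n}ᶜ) :=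
        measure_mono fun ω hω => by by_cases h : f ω ∈ F ω <;> simp_all
    _ ≤ δ + δ' := (measure_union_le _ _).trans (add_le_add (hFδ f hf) (hn ⟨f, hf⟩))

variable {E : Type*} [NormedAddCommGroup E]

theorem setIntegral_norm_ge_congr_ae {f g : Ω → E} (hfg : f =ᵐ[μ] g) (c : ℝ) :
    ∫ ω in {ω | c ≤ ‖f ω‖}, ‖f ω‖ ∂μ = ∫ ω in {ω | c ≤ ‖g ω‖}, ‖g ω‖ ∂μ := by
  calc ∫ ω in {ω | c ≤ ‖f ω‖}, ‖f ω‖ ∂μ = ∫ ω in {ω | c ≤ ‖g ω‖}, ‖f ω‖ ∂μ :=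
        setIntegral_congr_set (hfg.mono fun ω h => show (c ≤ ‖f ω‖) = (c ≤ ‖g ω‖) by rw [h])
    _ = ∫ ω in {ω | c ≤ ‖g ω‖}, ‖g ω‖ ∂μ :=
        integral_congr_ae (ae_restrict_of_ae (hfg.mono fun ω h => congrArg norm h))

theorem measure_setOf_notMem_congr_ae {X : Type*} {f g : Ω → X} (hfg : f =ᵐ[μ] g)
    (F : Ω → Set X) : μ {ω | f ω ∉ F ω} = μ {ω | g ω ∉ F ω} :=
  measure_congr (hfg.mono fun ω h => show (f ω ∉ F ω) = (g ω ∉ F ω) by rw [h])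

theorem setIntegral_norm_le_setIntegral_norm_ge_add [IsFiniteMeasure μ] [MeasurableSpace E]
    [OpensMeasurableSpace E] {f : Ω → E} (hf : Integrable f μ) (hfm : Measurable f) {c : ℝ}
    (hc : 0 ≤ c) (s : Set Ω) :
    ∫ ω in s, ‖f ω‖ ∂μ ≤ ∫ ω in {ω | c ≤ ‖f ω‖}, ‖f ω‖ ∂μ + c * μ.real s := by
  set t := {ω | c ≤ ‖f ω‖}
  have ht : MeasurableSet t := measurableSet_le measurable_const hfm.norm
  have htail : Integrable (t.indicator fun ω => ‖f ω‖) μ := hf.norm.indicator ht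
  have hconst : IntegrableOn (fun _ => c) s μ := integrableOn_const (measure_ne_top μ s)
  have hpoint : ∀ ω, ‖f ω‖ ≤ t.indicator (fun ω => ‖f ω‖) ω + c := by
    intro ω
    by_cases h : ω ∈ t
    · simpa [indicator_of_mem h] using hc
    · simpa [indicator_of_notMem h, t] using (not_le.1 h).le
  calc ∫ ω in s, ‖f ω‖ ∂μ
      ≤ ∫ ω in s, (t.indicator (fun ω => ‖f ω‖) ω + c) ∂μ :=
        setIntegral_mono hf.norm.integrableOn (htail.integrableOn.add hconst) hpoint
    _ = ∫ ω in s, t.indicator (fun ω => ‖f ω‖) ω ∂μ + c * μ.real s := by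
        rw [integral_add htail.integrableOn hconst, setIntegral_const, smul_eq_mul, mul_comm]
    _ ≤ ∫ ω, t.indicator (fun ω => ‖f ω‖) ω ∂μ + c * μ.real s := by
        grw [setIntegral_le_integral htail
          (ae_of_all _ fun ω => indicator_nonneg (fun _ _ => norm_nonneg _) ω)]
    _ = ∫ ω in t, ‖f ω‖ ∂μ + c * μ.real s := by rw [integral_indicator ht]

theorem _root_.Convex.setIntegral_mem_of_zero_mem [NormedSpace ℝ E] [CompleteSpace E]
    [IsProbabilityMeasure μ] {C : Set E} (hC : Convex ℝ C) (hCc : IsClosed C) (h0 : (0 : E) ∈ C)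
    {f : Ω → E} (hf : Integrable f μ) {s : Set Ω} (hs : MeasurableSet s)
    (hfs : ∀ ω ∈ s, f ω ∈ C) : ∫ ω in s, f ω ∂μ ∈ C := by
  rw [← integral_indicator hs]
  refine hC.integral_mem hCc (ae_of_all _ fun ω => ?_) (hf.indicator hs)
  by_cases h : ω ∈ s
  · simpa [indicator_of_mem h] using hfs ω h
  · simpa [indicator_of_notMem h] using h0

theorem setIntegral_mem_cthickening_convexHull [NormedSpace ℝ E] [CompleteSpace E]
    [MeasurableSpace E] [OpensMeasurableSpace E] [IsProbabilityMeasure μ] {f : Ω → E}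
    (hf : Integrable f μ) (hfm : Measurable f) {B : Set Ω} (hB : MeasurableSet B) {c r : ℝ}
    (hc : 0 ≤ c) (hr : 0 ≤ r) (P : Set E) :
    ∫ ω in B, f ω ∂μ ∈ cthickening (r + (∫ ω in {ω | c ≤ ‖f ω‖}, ‖f ω‖ ∂μ +
      c * μ.real {ω | f ω ∉ thickening r P})) (convexHull ℝ (insert 0 P)) := by
  set G := B ∩ f ⁻¹' thickening r P
  have hG : MeasurableSet G := hB.inter (hfm isOpen_thickening.measurableSet)
  have hGmem : ∫ ω in G, f ω ∂μ ∈ cthickening r (convexHull ℝ (insert 0 P)) :=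
    ((convex_convexHull ℝ _).cthickening r).setIntegral_mem_of_zero_mem isClosed_cthickening
      (self_subset_cthickening _ (subset_convexHull ℝ _ (mem_insert 0 P))) hf hG
      fun ω hω => thickening_subset_cthickening r _ <| thickening_subset_of_subset r
        ((subset_insert 0 P).trans (subset_convexHull ℝ _)) hω.2
  have hdist : dist (∫ ω in B, f ω ∂μ) (∫ ω in G, f ω ∂μ) ≤
      ∫ ω in {ω | c ≤ ‖f ω‖}, ‖f ω‖ ∂μ + c * μ.real {ω | f ω ∉ thickening r P} := by
    rw [dist_eq_norm, ← setIntegral_sdiff hG hf.integrableOn inter_subset_left]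
    calc ‖∫ ω in B \ G, f ω ∂μ‖
        ≤ ∫ ω in B \ G, ‖f ω‖ ∂μ := norm_integral_le_integral_norm _
      _ ≤ ∫ ω in {ω | c ≤ ‖f ω‖}, ‖f ω‖ ∂μ + c * μ.real (B \ G) :=
          setIntegral_norm_le_setIntegral_norm_ge_add hf hfm hc _
      _ ≤ _ := by
          gcongr
          · exact measure_ne_top μ _
          · exact fun ω hω hfω => hω.2 ⟨hω.1, hfω⟩
  rw [add_comm r]
  exact cthickening_cthickening_subset (by positivity) hr _
    (mem_cthickening_of_dist_le _ _ _ _ hGmem hdist)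

theorem totallyBounded_setIntegral_of_ui_tight [NormedSpace ℝ E] [CompleteSpace E]
    [SeparableSpace E] [MeasurableSpace E] [OpensMeasurableSpace E] [IsProbabilityMeasure μ]
    {L : Set (Ω → E)} (hL : ∀ f ∈ L, Integrable f μ) (hLm : ∀ f ∈ L, Measurable f)
    (hui : ∀ ε : ℝ, 0 < ε → ∃ c : ℝ, ∀ f ∈ L, ∫ ω in {ω | c ≤ ‖f ω‖}, ‖f ω‖ ∂μ ≤ ε)
    (htight : ∀ ε : ℝ, 0 < ε → ∃ F : Ω → Set E, (∀ ω, IsCompact (F ω)) ∧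
      MeasurableSet {p : Ω × E | p.2 ∈ F p.1} ∧ ∀ f ∈ L, μ {ω | f ω ∉ F ω} ≤ ENNReal.ofReal ε)
    {B : Set Ω} (hB : MeasurableSet B) :
    TotallyBounded {y | ∃ f ∈ L, y = ∫ ω in B, f ω ∂μ} := by
  refine totallyBounded_of_forall_subset_cthickening_isCompact fun ε hε => ?_
  obtain ⟨c₀, hc₀⟩ := hui (ε / 3) (by positivity)
  set c := max c₀ 1
  have hc : 0 < c := zero_lt_one.trans_le (le_max_right _ _)
  have hcui : ∀ f ∈ L, ∫ ω in {ω | c ≤ ‖f ω‖}, ‖f ω‖ ∂μ ≤ ε / 3 := fun f hf =>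
    (setIntegral_mono_set (hL f hf).norm.integrableOn (ae_of_all _ fun _ => norm_nonneg _)
      (ae_of_all _ fun ω (h : c ≤ ‖f ω‖) => (le_max_left _ _).trans h)).trans (hc₀ f hf)
  obtain ⟨F, hF, hFm, hFδ⟩ := htight (ε / (6 * c)) (by positivity)
  obtain ⟨P, hP, hPδ⟩ := exists_finite_forall_measure_notMem_thickening_le hLm hF hFm hFδ
    (r := ε / 3) (by positivity) (ENNReal.ofReal_pos.2 (by positivity : 0 < ε / (6 * c))).ne'
  refine ⟨convexHull ℝ (insert 0 P), (hP.insert 0).isCompact_convexHull ℝ, ?_⟩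
  rintro _ ⟨f, hf, rfl⟩
  refine cthickening_mono ?_ _ (setIntegral_mem_cthickening_convexHull (hL f hf) (hLm f hf) hB
    hc.le (r := ε / 3) (by positivity) P)
  have hbad : μ.real {ω | f ω ∉ thickening (ε / 3) P} ≤ ε / (3 * c) :=
    ENNReal.toReal_le_of_le_ofReal (by positivity) <| (hPδ f hf).trans_eq <| by
      rw [← ENNReal.ofReal_add (by positivity) (by positivity)]
      ring_nf
  calc ε / 3 + (∫ ω in {ω | c ≤ ‖f ω‖}, ‖f ω‖ ∂μ + c * μ.real {ω | f ω ∉ thickening (ε / 3) P})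
      ≤ ε / 3 + (ε / 3 + c * (ε / (3 * c))) := by gcongr; exact hcui f hf
    _ = ε := by field_simp; ring

end MeasureTheory

theorem averages_relatively_compact_of_ui_tight {Ω E : Type*} [MeasurableSpace Ω]
    [NormedAddCommGroup E] [NormedSpace ℝ E] [CompleteSpace E]
    [TopologicalSpace.SeparableSpace E] [MeasurableSpace E] [BorelSpace E]
    (μ : Measure Ω) [IsProbabilityMeasure μ]
    (L : Set (Ω → E)) (hL : ∀ f ∈ L, Integrable f μ)
    -- uniform integrability
    (hui : ∀ ε : ℝ, 0 < ε → ∃ c : ℝ, ∀ f ∈ L,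
      ∫ ω in {ω | c ≤ ‖f ω‖}, ‖f ω‖ ∂μ ≤ ε)
    -- tightness
    (htight : ∀ ε : ℝ, 0 < ε → ∃ F : Ω → Set E,
      (∀ ω, IsCompact (F ω)) ∧
      MeasurableSet {p : Ω × E | p.2 ∈ F p.1} ∧
      ∀ f ∈ L, μ {ω | f ω ∉ F ω} ≤ ENNReal.ofReal ε) :
    ∀ B : Set Ω, MeasurableSet B → 0 < μ B →
      IsCompact (closure {x : E | ∃ f ∈ L, x = avg μ f B}) := by
  intro B hB _
  set L' := {g : Ω → E | Measurable g ∧ ∃ f ∈ L, f =ᵐ[μ] g}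
  have hT : TotallyBounded {y | ∃ g ∈ L', y = ∫ ω in B, g ω ∂μ} := by
    refine totallyBounded_setIntegral_of_ui_tight (L := L')
      (fun g ⟨_, f, hf, hfg⟩ => (hL f hf).congr hfg) (fun g hg => hg.1) (fun ε hε => ?_) (fun ε hε => ?_) hB
    · obtain ⟨c, hc⟩ := hui ε hε
      exact ⟨c, fun g ⟨_, f, hf, hfg⟩ => setIntegral_norm_ge_congr_ae hfg c ▸ hc f hf⟩
    · obtain ⟨F, hF, hFm, hFε⟩ := htight ε hε
      exact ⟨F, hF, hFm, fun g ⟨_, f, hf, hfg⟩ => measure_setOf_notMem_congr_ae hfg F ▸ hFε f hf⟩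
  have hsub : {x | ∃ f ∈ L, x = avg μ f B} ⊆
      (fun y => (μ B).toReal⁻¹ • y) '' {y | ∃ g ∈ L', y = ∫ ω in B, g ω ∂μ} := by
    rintro _ ⟨f, hf, rfl⟩
    obtain ⟨g, hgm, hfg⟩ := (hL f hf).aemeasurable
    refine ⟨_, ⟨g, ⟨hgm, f, hf, hfg⟩, rfl⟩, ?_⟩
    rw [avg, setIntegral_congr_ae hB (hfg.mono fun ω h _ => h)]
  exact ((hT.image (uniformContinuous_const_smul _)).subset hsub).closure.isCompact_of_isClosed
    isClosed_closure
end

section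
/- Let (f_k) be a Pettis uniformly integrable sequence in L¹(μ, E). If for each subsequence (f_{k_j}), each ε > 0, and each measurable B with μ(B) > 0, there exists a measurable A ⊆ B with μ(A) > 0 such that liminf_j sup_{x* ∈ B_{E*}} (∫_A |x*(f_{k_j})| dμ)/μ(A) < ε, then ‖f_k‖_Pettis → 0. -/
open MeasureTheory Filter Topology

/-- The Pettis (semi)norm on `L¹(μ, E)`. -/
noncomputable def pettisNorm {Ω E : Type*} [MeasurableSpace Ω] [NormedAddCommGroup E]
    [NormedSpace ℝ E] (μ : Measure Ω) (f : Ω → E) : ℝ :=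
  ⨆ x' : {x' : StrongDual ℝ E // ‖x'‖ ≤ 1}, ∫ ω, |x'.1 (f ω)| ∂μ

/-!
If the Pettis norms do not tend to `0`, they stay `≥ ε` along an infinite set `N` of indices.
Pettis uniform integrability gives `c` with `∫_S |x'(f k)| ≤ c μ(S) + ε/4` for all `k`, `x'`, `S`.
Exhaust `Ω` greedily: a stage is an infinite `N' ⊆ N` together with a set `U` on which the Pettis
average of every `f k`, `k ∈ N'`, is at most `ε/4`. The hypothesis provides pieces outside `U` on
which the averages are small for infinitely many `k ∈ N'`; adjoin one of at least half the
supremal measure and keep only those `k`. If the remainders shrink to measure `0`, then for `k` in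
a late stage `‖f k‖_Pettis ≤ ε/4 + c μ(Uᶜ) + ε/4 < ε`. Otherwise the hypothesis, applied along a
diagonal sequence on the remainder, yields one piece that was a candidate at every stage, which
is impossible since the adjoined pieces are disjoint, so their measures tend to `0`.
-/

section PettisNorm

variable {Ω E : Type*} [MeasurableSpace Ω] [NormedAddCommGroup E] [NormedSpace ℝ E]
  {μ ν : Measure Ω} {f : Ω → E}

lemma pettisNorm_nonneg (ν : Measure Ω) (f : Ω → E) : 0 ≤ pettisNorm ν f :=
  Real.iSup_nonneg fun _ => integral_nonneg fun _ => abs_nonneg _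

lemma pettisNorm_le {C : ℝ}
    (h : ∀ x' : StrongDual ℝ E, ‖x'‖ ≤ 1 → ∫ ω, |x' (f ω)| ∂ν ≤ C) : pettisNorm ν f ≤ C :=
  haveI : Nonempty {x' : StrongDual ℝ E // ‖x'‖ ≤ 1} := ⟨⟨0, by simp⟩⟩
  ciSup_le fun x' => h x'.1 x'.2

lemma integral_abs_le_pettisNorm (hf : Integrable f ν) {x' : StrongDual ℝ E} (hx' : ‖x'‖ ≤ 1) :
    ∫ ω, |x' (f ω)| ∂ν ≤ pettisNorm ν f := by
  refine le_ciSup (f := fun x' : {x' : StrongDual ℝ E // ‖x'‖ ≤ 1} => ∫ ω, |x'.1 (f ω)| ∂ν)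
    ⟨∫ ω, ‖f ω‖ ∂ν, ?_⟩ ⟨x', hx'⟩
  rintro _ ⟨y, rfl⟩
  refine integral_mono_of_nonneg (.of_forall fun _ => abs_nonneg _) hf.norm (.of_forall fun ω => ?_)
  simpa only [← Real.norm_eq_abs, one_mul] using y.1.le_of_opNorm_le y.2 (f ω)

lemma pettisNorm_restrict_union_le (hf : Integrable f μ) {A B : Set Ω} (hAB : Disjoint A B)
    (hB : MeasurableSet B) :
    pettisNorm (μ.restrict (A ∪ B)) f ≤
      pettisNorm (μ.restrict A) f + pettisNorm (μ.restrict B) f := by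
  refine pettisNorm_le fun x' hx' => ?_
  have hint : Integrable (fun ω => |x' (f ω)|) μ := (x'.integrable_comp hf).abs
  rw [setIntegral_union hAB hB hint.integrableOn hint.integrableOn]
  exact add_le_add (integral_abs_le_pettisNorm hf.restrict hx')
    (integral_abs_le_pettisNorm hf.restrict hx')

lemma pettisNorm_le_restrict_add_restrict_compl (hf : Integrable f μ) {U : Set Ω}
    (hU : MeasurableSet U) :
    pettisNorm μ f ≤ pettisNorm (μ.restrict U) f + pettisNorm (μ.restrict Uᶜ) f := by
  simpa using pettisNorm_restrict_union_le hf disjoint_compl_right hU.compl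

end PettisNorm

section UniformIntegrability

variable {Ω E : Type*} [MeasurableSpace Ω] [NormedAddCommGroup E] [NormedSpace ℝ E]
  {μ : Measure Ω} [IsFiniteMeasure μ]

lemma setIntegral_le_mul_measureReal_add_setIntegral_ge {g : Ω → ℝ} (hg : Integrable g μ)
    (hg0 : 0 ≤ g) (c : ℝ) (S : Set Ω) :
    ∫ ω in S, g ω ∂μ ≤ max c 0 * μ.real S + ∫ ω in {ω | c ≤ g ω}, g ω ∂μ := by
  set T := {ω | c ≤ g ω}
  have hT : NullMeasurableSet T μ := nullMeasurableSet_le aemeasurable_const hg.aemeasurable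
  have hind : Integrable (T.indicator g) μ := hg.indicator₀ hT
  have hle : ∀ ω, g ω ≤ max c 0 + T.indicator g ω := fun ω => by
    by_cases hω : ω ∈ T
    · rw [Set.indicator_of_mem hω]
      exact le_add_of_nonneg_left (le_max_right c 0)
    · rw [Set.indicator_of_notMem hω, add_zero]
      exact (not_le.1 hω).le.trans (le_max_left c 0)
  calc ∫ ω in S, g ω ∂μ ≤ ∫ ω in S, (max c 0 + T.indicator g ω) ∂μ :=
        setIntegral_mono hg.integrableOn ((integrable_const _).add hind).integrableOn hle
    _ = max c 0 * μ.real S + ∫ ω in S, T.indicator g ω ∂μ := by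
        rw [integral_add (integrable_const _) hind.integrableOn, setIntegral_const, smul_eq_mul,
          mul_comm]
    _ ≤ max c 0 * μ.real S + ∫ ω, T.indicator g ω ∂μ :=
        add_le_add le_rfl
          (setIntegral_le_integral hind (.of_forall (Set.indicator_nonneg fun ω _ => hg0 ω)))
    _ = max c 0 * μ.real S + ∫ ω in T, g ω ∂μ := by rw [integral_indicator₀ hT]

lemma pettisNorm_restrict_le_of_tail {f : Ω → E} (hf : Integrable f μ) {c δ : ℝ}
    (htail : ∀ x' : StrongDual ℝ E, ‖x'‖ ≤ 1 →
      ∫ ω in {ω | c ≤ |x' (f ω)|}, |x' (f ω)| ∂μ ≤ δ) (S : Set Ω) :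
    pettisNorm (μ.restrict S) f ≤ max c 0 * μ.real S + δ :=
  pettisNorm_le fun x' hx' =>
    (setIntegral_le_mul_measureReal_add_setIntegral_ge (x'.integrable_comp hf).abs
      (fun _ => abs_nonneg _) c S).trans (add_le_add le_rfl (htail x' hx'))

end UniformIntegrability

section Measure

variable {Ω : Type*} [MeasurableSpace Ω] {μ : Measure Ω} [IsFiniteMeasure μ]

lemma exists_forall_measureReal_le_two_mul {P : Set Ω → Prop} (h : ∃ A, P A ∧ 0 < μ A) :
    ∃ A, P A ∧ ∀ A', P A' → μ.real A' ≤ 2 * μ.real A := by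
  obtain ⟨A₀, hA₀, hpos⟩ := h
  have hbdd : BddAbove (μ.real '' {A | P A}) :=
    ⟨μ.real Set.univ, by rintro _ ⟨A, -, rfl⟩; exact measureReal_mono (Set.subset_univ A)⟩
  have hA₀pos : 0 < μ.real A₀ := ENNReal.toReal_pos hpos.ne' (measure_ne_top μ A₀)
  have hsup : 0 < sSup (μ.real '' {A | P A}) := hA₀pos.trans_le (le_csSup hbdd ⟨A₀, hA₀, rfl⟩)
  obtain ⟨_, ⟨A, hA, rfl⟩, hlt⟩ :=
    exists_lt_of_lt_csSup ((show {A | P A}.Nonempty from ⟨A₀, hA₀⟩).image μ.real) (half_lt_self hsup)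
  exact ⟨A, hA, fun A' hA' => by linarith [le_csSup hbdd ⟨A', hA', rfl⟩]⟩

lemma tendsto_measureReal_iUnion_atTop {U : ℕ → Set Ω} (hU : Monotone U) :
    Tendsto (fun n => μ.real (U n)) atTop (𝓝 (μ.real (⋃ n, U n))) :=
  (ENNReal.tendsto_toReal (measure_ne_top μ _)).comp (tendsto_measure_iUnion_atTop hU)

lemma tendsto_measureReal_iInter_atTop {U : ℕ → Set Ω} (hm : ∀ n, MeasurableSet (U n))
    (hU : Antitone U) :
    Tendsto (fun n => μ.real (U n)) atTop (𝓝 (μ.real (⋂ n, U n))) :=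
  (ENNReal.tendsto_toReal (measure_ne_top μ _)).comp
    (tendsto_measure_iInter_atTop (fun n => (hm n).nullMeasurableSet) hU ⟨0, measure_ne_top μ _⟩)

lemma tendsto_measureReal_diff_succ {U : ℕ → Set Ω} (hm : ∀ n, MeasurableSet (U n))
    (hU : Monotone U) :
    Tendsto (fun n => μ.real (U (n + 1) \ U n)) atTop (𝓝 0) := by
  have hlim := tendsto_measureReal_iUnion_atTop (μ := μ) hU
  have hdiff : ∀ n, μ.real (U (n + 1) \ U n) = μ.real (U (n + 1)) - μ.real (U n) :=
    fun n => measureReal_sdiff (hU n.le_succ) (hm n)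
  simpa [hdiff] using (hlim.comp (tendsto_add_atTop_nat 1)).sub hlim

end Measure

section Exhaustion

variable {Ω E : Type*} [MeasurableSpace Ω] [NormedAddCommGroup E] [NormedSpace ℝ E]
  {μ : Measure Ω} {f : ℕ → Ω → E}

variable (μ f) in
def HasSmallAverages : Prop :=
  ∀ k : ℕ → ℕ, StrictMono k → ∀ ε : ℝ, 0 < ε →
    ∀ B : Set Ω, MeasurableSet B → 0 < μ B →
    ∃ A ⊆ B, MeasurableSet A ∧ 0 < μ A ∧
      Filter.liminf (fun j =>
        ⨆ x' : {x' : StrongDual ℝ E // ‖x'‖ ≤ 1},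
          (∫ ω in A, |x'.1 (f (k j) ω)| ∂μ) / (μ A).toReal) Filter.atTop < ε

lemma HasSmallAverages.exists_frequently_le [IsFiniteMeasure μ] (h : HasSmallAverages μ f)
    {C : ℝ} (hC : ∀ k S, pettisNorm (μ.restrict S) (f k) ≤ C) {e : ℕ → ℕ} (he : StrictMono e)
    {η : ℝ} (hη : 0 < η) {B : Set Ω} (hB : MeasurableSet B) (hBpos : 0 < μ B) :
    ∃ A ⊆ B, MeasurableSet A ∧ 0 < μ A ∧
      ∃ᶠ j in atTop, pettisNorm (μ.restrict A) (f (e j)) ≤ η * μ.real A := by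
  obtain ⟨A, hAB, hA, hApos, hlim⟩ := h e he η hη B hB hBpos
  have hr : 0 < μ.real A := ENNReal.toReal_pos hApos.ne' (measure_ne_top μ A)
  have hu : ∀ j, (⨆ x' : {x' : StrongDual ℝ E // ‖x'‖ ≤ 1},
      (∫ ω in A, |x'.1 (f (e j) ω)| ∂μ) / (μ A).toReal) =
      pettisNorm (μ.restrict A) (f (e j)) / μ.real A := fun j => by
    simp only [div_eq_mul_inv, pettisNorm, measureReal_def]
    rw [Real.iSup_mul_of_nonneg (inv_nonneg.2 ENNReal.toReal_nonneg)]
  simp only [hu] at hlim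
  have hcobdd : IsCoboundedUnder (· ≥ ·) atTop
      fun j => pettisNorm (μ.restrict A) (f (e j)) / μ.real A :=
    isCoboundedUnder_ge_of_le atTop fun j => div_le_div_of_nonneg_right (hC (e j) A) hr.le
  refine ⟨A, hAB, hA, hApos, (frequently_lt_of_liminf_lt hcobdd hlim).mono fun j hj => ?_⟩
  exact ((div_lt_iff₀ hr).1 hj).le

variable (μ f) in
def IsExhaustionStage (η : ℝ) (s : Set ℕ × Set Ω) : Prop :=
  s.1.Infinite ∧ MeasurableSet s.2 ∧
    ∀ k ∈ s.1, pettisNorm (μ.restrict s.2) (f k) ≤ η * μ.real s.2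

variable (μ f) in
def IsExhaustionCandidate (η : ℝ) (s : Set ℕ × Set Ω) (A : Set Ω) : Prop :=
  A ⊆ s.2ᶜ ∧ MeasurableSet A ∧ 0 < μ A ∧
    ∃ᶠ k in atTop, k ∈ s.1 ∧ pettisNorm (μ.restrict A) (f k) ≤ η * μ.real A

lemma exists_next_exhaustionStage [IsFiniteMeasure μ] (hf : ∀ k, Integrable (f k) μ)
    (h : HasSmallAverages μ f) {C : ℝ} (hC : ∀ k S, pettisNorm (μ.restrict S) (f k) ≤ C) {η : ℝ}
    (hη : 0 < η) {s : Set ℕ × Set Ω} (hs : IsExhaustionStage μ f η s) :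
    ∃ t, IsExhaustionStage μ f η t ∧ t.1 ⊆ s.1 ∧ s.2 ⊆ t.2 ∧
      ∀ A, IsExhaustionCandidate μ f η s A → μ.real A ≤ 2 * μ.real (t.2 \ s.2) := by
  obtain ⟨hN, hU, hsmall⟩ := hs
  rcases eq_zero_or_pos (μ s.2ᶜ) with h0 | hpos
  · exact ⟨s, ⟨hN, hU, hsmall⟩, subset_rfl, subset_rfl,
      fun A hA => absurd (measure_mono_null hA.1 h0) hA.2.2.1.ne'⟩
  have he := Nat.nth_strictMono hN
  obtain ⟨A, ⟨hAU, hA, -, hfreq⟩, hmax⟩ :=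
    exists_forall_measureReal_le_two_mul (P := IsExhaustionCandidate μ f η s) <| by
      obtain ⟨A, hAU, hA, hApos, hfreq⟩ := h.exists_frequently_le hC he hη hU.compl hpos
      exact ⟨A, ⟨hAU, hA, hApos, he.tendsto_atTop.frequently
        ((Eventually.of_forall (Nat.nth_mem_of_infinite hN)).and_frequently hfreq)⟩, hApos⟩
  have hdisj : Disjoint s.2 A := Set.subset_compl_iff_disjoint_left.1 hAU
  refine ⟨({k ∈ s.1 | pettisNorm (μ.restrict A) (f k) ≤ η * μ.real A}, s.2 ∪ A),
    ⟨Nat.frequently_atTop_iff_infinite.1 hfreq, hU.union hA, fun k hk => ?_⟩,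
    Set.sep_subset _ _, Set.subset_union_left, ?_⟩
  · calc pettisNorm (μ.restrict (s.2 ∪ A)) (f k)
        ≤ pettisNorm (μ.restrict s.2) (f k) + pettisNorm (μ.restrict A) (f k) :=
          pettisNorm_restrict_union_le (hf k) hdisj hA
      _ ≤ η * μ.real s.2 + η * μ.real A := add_le_add (hsmall k hk.1) hk.2
      _ = η * μ.real (s.2 ∪ A) := by rw [measureReal_union hdisj hA, mul_add]
  · simpa only [Set.union_sdiff_left, hdisj.symm.sdiff_eq_left] using hmax

lemma exists_exhaustion [IsFiniteMeasure μ] (hf : ∀ k, Integrable (f k) μ)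
    (h : HasSmallAverages μ f) {C : ℝ} (hC : ∀ k S, pettisNorm (μ.restrict S) (f k) ≤ C) {η : ℝ}
    (hη : 0 < η) {N : Set ℕ} (hN : N.Infinite) :
    ∃ s : ℕ → Set ℕ × Set Ω, (∀ n, IsExhaustionStage μ f η (s n)) ∧ (∀ n, (s n).1 ⊆ N) ∧
      Antitone (fun n => (s n).1) ∧ Monotone (fun n => (s n).2) ∧
      ∀ n A, IsExhaustionCandidate μ f η (s n) A →
        μ.real A ≤ 2 * μ.real ((s (n + 1)).2 \ (s n).2) := by
  have hs₀ : IsExhaustionStage μ f η (N, ∅) := ⟨hN, .empty, fun k _ => by simp [pettisNorm]⟩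
  choose next hnext using fun s : {s // IsExhaustionStage μ f η s} =>
    exists_next_exhaustionStage hf h hC hη s.2
  let seq : ℕ → {s // IsExhaustionStage μ f η s} :=
    fun n => Nat.rec ⟨(N, ∅), hs₀⟩ (fun _ s => ⟨next s, (hnext s).1⟩) n
  have hanti : Antitone fun n => (seq n).1.1 :=
    antitone_nat_of_succ_le fun n => (hnext (seq n)).2.1
  exact ⟨fun n => (seq n).1, fun n => (seq n).2, fun n => hanti n.zero_le, hanti,
    monotone_nat_of_le_succ fun n => (hnext (seq n)).2.2.1, fun n => (hnext (seq n)).2.2.2⟩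

end Exhaustion

section Main

variable {Ω E : Type*} [MeasurableSpace Ω] [NormedAddCommGroup E] [NormedSpace ℝ E]
  {μ : Measure Ω} [IsProbabilityMeasure μ] {f : ℕ → Ω → E}

lemma exists_mem_pettisNorm_lt (hf : ∀ k, Integrable (f k) μ)
    (hui : ∀ ε : ℝ, 0 < ε → ∃ c : ℝ, ∀ k, ∀ x' : StrongDual ℝ E, ‖x'‖ ≤ 1 →
      ∫ ω in {ω | c ≤ |x' (f k ω)|}, |x' (f k ω)| ∂μ ≤ ε)
    (h : HasSmallAverages μ f) {ε : ℝ} (hε : 0 < ε) {N : Set ℕ} (hN : N.Infinite) :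
    ∃ k ∈ N, pettisNorm μ (f k) < ε := by
  obtain ⟨c, hc⟩ := hui (ε / 4) (by positivity)
  have hbound (k : ℕ) (S : Set Ω) :
      pettisNorm (μ.restrict S) (f k) ≤ max c 0 * μ.real S + ε / 4 :=
    pettisNorm_restrict_le_of_tail (hf k) (hc k) S
  have hC (k : ℕ) (S : Set Ω) : pettisNorm (μ.restrict S) (f k) ≤ max c 0 + ε / 4 :=
    (hbound k S).trans (add_le_add (mul_le_of_le_one_right (le_max_right c 0)
      measureReal_le_one) le_rfl)
  obtain ⟨s, hs, hsN, hanti, hmono, hmax⟩ := exists_exhaustion hf h hC (η := ε / 4)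
    (by positivity) hN
  have hU (n : ℕ) : MeasurableSet (s n).2 := (hs n).2.1
  rcases eq_zero_or_pos (μ (⋂ n, (s n).2ᶜ)) with hV | hV
  · have hlim : Tendsto (fun n => max c 0 * μ.real (s n).2ᶜ) atTop (𝓝 0) := by
      simpa [Measure.real, hV] using (tendsto_measureReal_iInter_atTop (μ := μ) (fun n => (hU n).compl)
        fun m n hmn => Set.compl_subset_compl.2 (hmono hmn)).const_mul (max c 0)
    obtain ⟨n, hn⟩ := (hlim.eventually (gt_mem_nhds (by positivity : (0 : ℝ) < ε / 4))).exists
    obtain ⟨k, hk⟩ := (hs n).1.nonempty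
    refine ⟨k, hsN n hk, ?_⟩
    calc pettisNorm μ (f k)
        ≤ pettisNorm (μ.restrict (s n).2) (f k) + pettisNorm (μ.restrict (s n).2ᶜ) (f k) :=
          pettisNorm_le_restrict_add_restrict_compl (hf k) (hU n)
      _ ≤ ε / 4 * μ.real (s n).2 + (max c 0 * μ.real (s n).2ᶜ + ε / 4) :=
          add_le_add ((hs n).2.2 k hk) (hbound k _)
      _ < ε := by nlinarith [measureReal_le_one (μ := μ) (s := (s n).2)]
  · exfalso
    obtain ⟨χ, hχ, hχs⟩ := extraction_forall_of_frequently fun n =>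
      Nat.frequently_atTop_iff_infinite.2 (hs n).1
    obtain ⟨A, hAV, hA, hApos, hfreq⟩ := h.exists_frequently_le hC hχ (by positivity : 0 < ε / 4)
      (.iInter fun n => (hU n).compl) hV
    have hcand (n : ℕ) : IsExhaustionCandidate μ f (ε / 4) (s n) A :=
      ⟨hAV.trans (Set.iInter_subset _ n), hA, hApos, hχ.tendsto_atTop.frequently
        (((eventually_ge_atTop n).mono fun m hm => hanti hm (hχs m)).and_frequently hfreq)⟩
    have hlim := (tendsto_measureReal_diff_succ (μ := μ) hU hmono).const_mul 2
    rw [mul_zero] at hlim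
    exact (ENNReal.toReal_pos hApos.ne' (measure_ne_top μ A)).not_ge
      (ge_of_tendsto' hlim fun n => hmax n A (hcand n))

end Main

theorem pettis_null_of_small_averages_general {Ω E : Type*} [MeasurableSpace Ω]
    [NormedAddCommGroup E] [NormedSpace ℝ E]
    (μ : Measure Ω) [IsProbabilityMeasure μ]
    (f : ℕ → Ω → E) (hf : ∀ k, Integrable (f k) μ)
    -- Pettis uniform integrability
    (hui : ∀ ε : ℝ, 0 < ε → ∃ c : ℝ, ∀ k, ∀ x' : StrongDual ℝ E, ‖x'‖ ≤ 1 →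
      ∫ ω in {ω | c ≤ |x' (f k ω)|}, |x' (f k ω)| ∂μ ≤ ε)
    (h : ∀ k : ℕ → ℕ, StrictMono k → ∀ ε : ℝ, 0 < ε →
      ∀ B : Set Ω, MeasurableSet B → 0 < μ B →
      ∃ A ⊆ B, MeasurableSet A ∧ 0 < μ A ∧
        Filter.liminf (fun j =>
          ⨆ x' : {x' : StrongDual ℝ E // ‖x'‖ ≤ 1},
            (∫ ω in A, |x'.1 (f (k j) ω)| ∂μ) / (μ A).toReal) Filter.atTop < ε) :
    Filter.Tendsto (fun k => pettisNorm μ (f k)) Filter.atTop (nhds 0) := by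
  refine tendsto_order.2 ⟨fun a ha => .of_forall fun k => ha.trans_le (pettisNorm_nonneg μ (f k)),
    fun ε hε => ?_⟩
  by_contra hfreq
  rw [not_eventually, Nat.frequently_atTop_iff_infinite] at hfreq
  obtain ⟨k, hk, hlt⟩ := exists_mem_pettisNorm_lt hf hui h hε hfreq
  exact hk hlt

theorem pettis_null_of_small_averages {Ω E : Type*} [MeasurableSpace Ω]
    [NormedAddCommGroup E] [NormedSpace ℝ E] [CompleteSpace E]
    (μ : Measure Ω) [IsProbabilityMeasure μ]
    (f : ℕ → Ω → E) (hf : ∀ k, Integrable (f k) μ)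
    -- Pettis uniform integrability
    (hui : ∀ ε : ℝ, 0 < ε → ∃ c : ℝ, ∀ k, ∀ x' : StrongDual ℝ E, ‖x'‖ ≤ 1 →
      ∫ ω in {ω | c ≤ |x' (f k ω)|}, |x' (f k ω)| ∂μ ≤ ε)
    (h : ∀ k : ℕ → ℕ, StrictMono k → ∀ ε : ℝ, 0 < ε →
      ∀ B : Set Ω, MeasurableSet B → 0 < μ B →
      ∃ A ⊆ B, MeasurableSet A ∧ 0 < μ A ∧
        Filter.liminf (fun j =>
          ⨆ x' : {x' : StrongDual ℝ E // ‖x'‖ ≤ 1},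
            (∫ ω in A, |x'.1 (f (k j) ω)| ∂μ) / (μ A).toReal) Filter.atTop < ε) :
    Filter.Tendsto (fun k => pettisNorm μ (f k)) Filter.atTop (nhds 0) :=
  pettis_null_of_small_averages_general μ f hf hui h
end
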